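/- arXiv:1308.5725 — 6 statements merged into one kernel-verified Lean document; each statement's English description precedes it below -/
import Mathlib

section
/- Let W be the disjoint union of finite sets W(1),…,W(n) with |W(i)| = D(i) and S = ∑_{i=1}^n D(i) even. Let (ω(i,j))_{1≤i,j≤n} be a symmetric matrix of nonnegative integers with ω(i,i) even for all i and D(i) = ∑_{j=1}^n ω(i,j) for all i. Then the number of perfect matchings σ of W such that, for every i < j, exactly ω(i,j) pairs of σ have one endpoint in W(i) and the other in W(j), and for every i exactly ω(i,i)/2 pairs of σ lie inside W(i), equals (∏_{i=1}^n D(i)!) / ( ∏_{i=1}^n (ω(i,i)/2)! · 2^{ω(i,i)/2} · ∏_{i<j} ω(i,j)! ). -/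
/-!
Record a perfect matching `σ` of `W = Σ i, W(i)` by the colouring `t = c ∘ σ`, where `c x` is the
index of the block containing `x`. For a fixed `t`, the matchings inducing `t` are exactly the
choices of a bijection between the points of `W(i)` sent to `W(j)` and those of `W(j)` sent to
`W(i)` for each `i < j`, together with a perfect matching of the points of `W(i)` sent into `W(i)`;
there are `ω(i,j)!` of the former and `ω(i,i)! / ((ω(i,i)/2)! 2^(ω(i,i)/2))` of the latter (the
count of fixed-point-free involutions by cycle type). The admissible colourings split over the
blocks, and on `W(i)` they are counted by the multinomial `D(i)! / ∏ j, ω(i,j)!`. Since `ω` is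
symmetric, `∏ i, ∏ j, ω(i,j)! = (∏ i < j, ω(i,j)!)² ∏ i, ω(i,i)!`, and the formula follows.
-/

open Finset Equiv Nat

namespace Equiv.Perm

variable {α : Type*}

def IsPerfectMatching (σ : Perm α) : Prop := (∀ x, σ (σ x) = x) ∧ ∀ x, σ x ≠ x

variable [Fintype α] [DecidableEq α]

theorem isPerfectMatching_iff_cycleType {m : ℕ} (hα : Fintype.card α = 2 * m) {σ : Perm α} :
    σ.IsPerfectMatching ↔ σ.cycleType = Multiset.replicate m 2 := by
  have hsq : (∀ x, σ (σ x) = x) ↔ σ ^ 2 = 1 := by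
    simp [Equiv.ext_iff, sq]
  have hfree : (∀ x, σ x ≠ x) ↔ #σ.support = 2 * m := by
    rw [← hα, Finset.card_eq_iff_eq_univ, Finset.eq_univ_iff_forall]
    simp only [mem_support]
  have : Fact (Nat.Prime 2) := ⟨Nat.prime_two⟩
  rw [IsPerfectMatching, hsq, hfree, pow_prime_eq_one_iff, Multiset.eq_replicate, ← sum_cycleType]
  constructor
  · rintro ⟨h2, hsum⟩
    refine ⟨?_, h2⟩
    rw [Multiset.eq_replicate_card.mpr h2, Multiset.sum_replicate, smul_eq_mul] at hsum
    omega
  · rintro ⟨hcard, h2⟩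
    refine ⟨h2, ?_⟩
    rw [Multiset.eq_replicate_card.mpr h2, Multiset.sum_replicate, smul_eq_mul, hcard, mul_comm]

theorem card_isPerfectMatching_mul {m : ℕ} (hα : Fintype.card α = 2 * m) :
    Nat.card {σ : Perm α // σ.IsPerfectMatching} * (m ! * 2 ^ m) = (2 * m)! := by
  have hcycle := card_of_cycleType_mul_eq α (Multiset.replicate m 2)
  have hcount : ∏ k ∈ (Multiset.replicate m 2).toFinset,
      ((Multiset.replicate m 2).count k)! = m ! := by
    rcases Nat.eq_zero_or_pos m with rfl | hm
    · simp
    · simp [Multiset.toFinset_replicate, hm.ne']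
  rw [Multiset.sum_replicate, Multiset.prod_replicate, smul_eq_mul, hα, mul_comm m 2,
    Nat.sub_self, hcount,
    if_pos ⟨le_rfl, fun a ha => (Multiset.eq_of_mem_replicate ha).ge⟩] at hcycle
  rw [Nat.card_congr (Equiv.subtypeEquivRight fun σ => isPerfectMatching_iff_cycleType hα),
    Nat.card_eq_fintype_card, Fintype.card_subtype]
  simpa [mul_comm] using hcycle

end Equiv.Perm

theorem Nat.card_equiv_of_card_eq {α β : Type*} [Finite α] [Finite β]
    (h : Nat.card α = Nat.card β) : Nat.card (α ≃ β) = (Nat.card α)! := by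
  obtain ⟨e⟩ := Finite.card_eq.mp h
  rw [← Nat.card_perm]
  exact Nat.card_congr ((Equiv.refl α).equivCongr e.symm)

def Equiv.fiberwiseEquiv {X Y ι : Type*} (t : X → ι) (g : Y → ι) :
    {e : X ≃ Y // g ∘ e = t} ≃ ∀ j, {x // t x = j} ≃ {y // g y = j} where
  toFun e j := e.1.subtypeEquiv fun x => by rw [← congrFun e.2 x]; rfl
  invFun f := ⟨ofFiberEquiv f, funext (ofFiberEquiv_map f)⟩
  left_inv e := by ext x; simp [ofFiberEquiv]
  right_inv f := by funext j; ext ⟨x, rfl⟩; rfl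

/-- Colourings with fibre sizes `k` are counted through the equivalences `X ≃ Σ j, Fin (k j)`,
grouped by the colouring they induce. -/
theorem card_fun_fiber_card_eq_mul_prod_factorial {X ι : Type*} [Fintype X] [Fintype ι]
    (k : ι → ℕ) (hX : Fintype.card X = ∑ j, k j) :
    Nat.card {t : X → ι // ∀ j, Nat.card {x // t x = j} = k j} * ∏ j, (k j)! =
      (Fintype.card X)! := by
  classical
  let g : (Σ j, Fin (k j)) → ι := Sigma.fst
  have hg : ∀ j, Nat.card {y // g y = j} = k j := fun j => by
    rw [Nat.card_congr (Equiv.sigmaSubtype j), Nat.card_eq_fintype_card, Fintype.card_fin]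
  have hfiber : ∀ t : X → ι, Nat.card {e : X ≃ Σ j, Fin (k j) // g ∘ e = t} =
      if ∀ j, Nat.card {x // t x = j} = k j then ∏ j, (k j)! else 0 := by
    intro t
    rw [Nat.card_congr (Equiv.fiberwiseEquiv t g), Nat.card_pi, ← Fintype.prod_ite_zero]
    refine Finset.prod_congr rfl fun j _ => ?_
    split_ifs with h
    · rw [Nat.card_equiv_of_card_eq (h.trans (hg j).symm), h]
    · rw [← hg j] at h
      have : IsEmpty ({x // t x = j} ≃ {y // g y = j}) := ⟨fun e => h (Nat.card_congr e)⟩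
      exact Nat.card_of_isEmpty
  calc _ = ∑ t : X → ι, Nat.card {e : X ≃ Σ j, Fin (k j) // g ∘ e = t} := by
        rw [Nat.card_eq_fintype_card, Fintype.card_subtype, Finset.card_eq_sum_ones,
          Finset.sum_mul, Finset.sum_filter]
        simp_rw [hfiber, one_mul]
    _ = Nat.card (X ≃ Σ j, Fin (k j)) := by
        rw [← Nat.card_sigma]
        exact Nat.card_congr (sigmaFiberEquiv fun e : X ≃ Σ j, Fin (k j) => g ∘ e)
    _ = _ := by
        rw [Nat.card_eq_fintype_card, Fintype.card_equiv (Fintype.equivOfCardEq (by simp [hX]))]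

theorem Nat.card_sigma_fst_eq_and {ι : Type*} {β : ι → Type*} (i : ι) (P : (Σ i, β i) → Prop) :
    Nat.card {x : Σ i, β i // x.1 = i ∧ P x} = Nat.card {b : β i // P ⟨i, b⟩} := by
  refine (Nat.card_eq_of_bijective (fun b => ⟨⟨i, b.1⟩, rfl, b.2⟩) ⟨?_, ?_⟩).symm
  · intro b b' h
    exact Subtype.ext (sigma_mk_injective (congrArg Subtype.val h))
  · rintro ⟨⟨_, b⟩, rfl, hb⟩
    exact ⟨⟨b, hb⟩, rfl⟩

theorem Nat.card_sigma_fun_fiber_card_eq_prod {ι γ : Type*} [Fintype ι] {β : ι → Type*}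
    (k : ι → γ → ℕ) :
    Nat.card {t : (Σ i, β i) → γ // ∀ i j, Nat.card {x // x.1 = i ∧ t x = j} = k i j} =
      ∏ i, Nat.card {u : β i → γ // ∀ j, Nat.card {b // u b = j} = k i j} := by
  rw [← Nat.card_pi]
  refine Nat.card_congr (((Equiv.piCurry fun _ _ => γ).subtypeEquiv fun t => ?_).trans
    Equiv.subtypePiEquivPi)
  simp only [Nat.card_sigma_fst_eq_and]
  rfl

theorem Nat.card_subtype_and_comp_eq_sum {α β : Type*} [Finite α] [Fintype β] (P : α → Prop)
    (Q : β → Prop) [DecidablePred Q] (f : α → β) :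
    Nat.card {a // P a ∧ Q (f a)} = ∑ b with Q b, Nat.card {a // P a ∧ f a = b} := by
  rw [Finset.sum_subtype _ (p := Q) (fun b => by simp), ← Nat.card_sigma]
  exact Nat.card_congr
    { toFun a := ⟨⟨f a, a.2.2⟩, a, a.2.1, rfl⟩
      invFun b := ⟨b.2, b.2.2.1, by rw [b.2.2.2]; exact b.1.2⟩
      left_inv _ := rfl
      right_inv b := Sigma.subtype_ext (Subtype.ext b.2.2.2) rfl }

section Gluing

variable {X ι : Type*} [LinearOrder ι] (c t : X → ι)

-- For `t = c ∘ σ`, `Block c t i j` consists of the points of colour `i` sent to colour `j`.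
abbrev Block (i j : ι) : Type _ := {x : X // c x = i ∧ t x = j}

abbrev BlockPairing : Type _ :=
  ∀ p : {p : ι × ι // p.1 < p.2}, Block c t p.1.1 p.1.2 ≃ Block c t p.1.2 p.1.1

variable {c t}

def glue (f : BlockPairing c t) (v : ∀ i, Perm (Block c t i i)) (x : X) : X :=
  if h : c x < t x then f ⟨(c x, t x), h⟩ ⟨x, rfl, rfl⟩
  else if h' : t x < c x then (f ⟨(t x, c x), h'⟩).symm ⟨x, rfl, rfl⟩
  else v (c x) ⟨x, rfl, le_antisymm (not_lt.1 h) (not_lt.1 h')⟩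

variable (f : BlockPairing c t) (v : ∀ i, Perm (Block c t i i))

theorem glue_of_lt {i j : ι} (hij : i < j) (x : Block c t i j) :
    glue f v x = f ⟨(i, j), hij⟩ x := by
  obtain ⟨x, rfl, rfl⟩ := x
  rw [glue, dif_pos hij]

theorem glue_of_gt {i j : ι} (hij : i < j) (x : Block c t j i) :
    glue f v x = (f ⟨(i, j), hij⟩).symm x := by
  obtain ⟨x, rfl, rfl⟩ := x
  rw [glue, dif_neg hij.not_gt, dif_pos hij]

theorem glue_of_diag (i : ι) (x : Block c t i i) : glue f v x = v i x := by
  obtain ⟨x, rfl, hx⟩ := x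
  rw [glue, dif_neg hx.not_gt, dif_neg hx.not_lt]

theorem glue_trichotomy (x : X) :
    (∃ h : c x < t x, glue f v x = f ⟨(c x, t x), h⟩ ⟨x, rfl, rfl⟩) ∨
    (∃ h : t x < c x, glue f v x = (f ⟨(t x, c x), h⟩).symm ⟨x, rfl, rfl⟩) ∨
    (∃ h : t x = c x, glue f v x = v (c x) ⟨x, rfl, h⟩) := by
  rcases lt_trichotomy (c x) (t x) with h | h | h
  · exact Or.inl ⟨h, glue_of_lt f v h ⟨x, rfl, rfl⟩⟩
  · exact Or.inr (Or.inr ⟨h.symm, glue_of_diag f v _ ⟨x, rfl, h.symm⟩⟩)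
  · exact Or.inr (Or.inl ⟨h, glue_of_gt f v h ⟨x, rfl, rfl⟩⟩)

theorem comp_glue : c ∘ glue f v = t := by
  funext x
  rw [Function.comp_apply]
  rcases glue_trichotomy f v x with ⟨_, h⟩ | ⟨_, h⟩ | ⟨hx, h⟩ <;> rw [h]
  · exact (f _ _).2.1
  · exact ((f _).symm _).2.1
  · exact (v _ _).2.1.trans hx.symm

theorem glue_involutive (hv : ∀ i x, v i (v i x) = x) : Function.Involutive (glue f v) := by
  intro x
  rcases glue_trichotomy f v x with ⟨hx, h⟩ | ⟨hx, h⟩ | ⟨hx, h⟩ <;> rw [h]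
  · rw [glue_of_gt f v hx, Equiv.symm_apply_apply]
  · rw [glue_of_lt f v hx, Equiv.apply_symm_apply]
  · rw [glue_of_diag f v, hv]

theorem glue_ne_self (hv : ∀ i x, v i x ≠ x) (x : X) : glue f v x ≠ x := by
  intro heq
  have hc := congrFun (comp_glue f v) x
  rw [Function.comp_apply, heq] at hc
  rcases glue_trichotomy f v x with ⟨hx, -⟩ | ⟨hx, -⟩ | ⟨hx, h⟩
  · exact hx.ne hc
  · exact hx.ne' hc
  · exact hv _ _ (Subtype.ext (h.symm.trans heq))

def restrictBlock {σ : Perm X} (hσ : ∀ x, σ (σ x) = x) (hct : ∀ x, c (σ x) = t x) (i j : ι) :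
    Block c t i j ≃ Block c t j i where
  toFun y := ⟨σ y, (hct y).trans y.2.2, by rw [← hct, hσ, y.2.1]⟩
  invFun y := ⟨σ y, (hct y).trans y.2.2, by rw [← hct, hσ, y.2.1]⟩
  left_inv y := Subtype.ext (hσ y)
  right_inv y := Subtype.ext (hσ y)

theorem glue_restrictBlock {σ : Perm X} (hσ : ∀ x, σ (σ x) = x) (hct : ∀ x, c (σ x) = t x) :
    glue (fun p => restrictBlock hσ hct p.1.1 p.1.2) (fun i => restrictBlock hσ hct i i) = σ := by
  funext x
  rcases glue_trichotomy (fun p => restrictBlock hσ hct p.1.1 p.1.2)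
    (fun i => restrictBlock hσ hct i i) x with ⟨_, h⟩ | ⟨_, h⟩ | ⟨_, h⟩ <;> exact h

variable (c t) in
def perfectMatchingOverEquiv :
    {σ : Perm X // σ.IsPerfectMatching ∧ c ∘ σ = t} ≃
      BlockPairing c t × ∀ i, {τ : Perm (Block c t i i) // τ.IsPerfectMatching} where
  toFun σ := (fun p => restrictBlock σ.2.1.1 (congrFun σ.2.2) p.1.1 p.1.2, fun i =>
    ⟨restrictBlock σ.2.1.1 (congrFun σ.2.2) i i, fun y => Subtype.ext (σ.2.1.1 y),
      fun y h => σ.2.1.2 y (congrArg Subtype.val h)⟩)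
  invFun fv := ⟨(glue_involutive fv.1 (fun i => (fv.2 i).1) fun i => (fv.2 i).2.1).toPerm,
    ⟨glue_involutive fv.1 (fun i => (fv.2 i).1) fun i => (fv.2 i).2.1,
      glue_ne_self fv.1 (fun i => (fv.2 i).1) fun i => (fv.2 i).2.2⟩,
    comp_glue fv.1 fun i => (fv.2 i).1⟩
  left_inv σ := Subtype.ext (Equiv.ext (congrFun (glue_restrictBlock σ.2.1.1 (congrFun σ.2.2))))
  right_inv fv := Prod.ext (funext fun p => Equiv.ext fun y => Subtype.ext
      (glue_of_lt fv.1 (fun i => (fv.2 i).1) p.2 y))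
    (funext fun i => Subtype.ext (Equiv.ext fun y => Subtype.ext
      (glue_of_diag fv.1 (fun i => (fv.2 i).1) i y)))

theorem card_perfectMatchingOver_mul [Finite X] [Fintype ι] {ω : ι → ι → ℕ}
    (hsym : ∀ i j, ω i j = ω j i) (heven : ∀ i, Even (ω i i))
    (hblock : ∀ i j, Nat.card (Block c t i j) = ω i j) :
    Nat.card {σ : Perm X // σ.IsPerfectMatching ∧ c ∘ σ = t} *
        ∏ i, (ω i i / 2)! * 2 ^ (ω i i / 2) =
      (∏ p ∈ univ.filter (fun p : ι × ι => p.1 < p.2), (ω p.1 p.2)!) * ∏ i, (ω i i)! := by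
  classical
  rw [Nat.card_congr (perfectMatchingOverEquiv c t), Nat.card_prod, Nat.card_pi, Nat.card_pi,
    mul_assoc, ← prod_mul_distrib]
  congr 1
  · rw [prod_congr rfl fun p _ => by
      rw [Nat.card_equiv_of_card_eq (by rw [hblock, hblock, hsym]), hblock]]
    exact (prod_subtype _ (fun p => by simp) fun p : ι × ι => (ω p.1 p.2)!).symm
  · refine prod_congr rfl fun i _ => ?_
    have := Fintype.ofFinite (Block c t i i)
    have hω := Nat.two_mul_div_two_of_even (heven i)
    rw [Perm.card_isPerfectMatching_mul (by rw [← Nat.card_eq_fintype_card, hblock, hω]), hω]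

end Gluing

theorem Finset.prod_prod_eq_sq_mul_prod_diag {M ι : Type*} [CommMonoid M] [Fintype ι]
    [LinearOrder ι] {f : ι → ι → M} (hf : ∀ i j, f i j = f j i) :
    ∏ i, ∏ j, f i j = (∏ p ∈ univ.filter (fun p : ι × ι => p.1 < p.2), f p.1 p.2) ^ 2 *
      ∏ i, f i i := by
  have hgt : ∏ p ∈ univ.filter (fun p : ι × ι => ¬p.1 < p.2 ∧ p.2 < p.1), f p.1 p.2 =
      ∏ p ∈ univ.filter (fun p : ι × ι => p.1 < p.2), f p.1 p.2 :=
    prod_nbij' Prod.swap Prod.swap (by simp +contextual)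
      (by simp +contextual [le_of_lt]) (by simp) (by simp) fun p _ => hf _ _
  have hdiag : ∏ p ∈ univ.filter (fun p : ι × ι => ¬p.1 < p.2 ∧ ¬p.2 < p.1), f p.1 p.2 =
      ∏ i, f i i := by
    rw [← prod_diag univ (fun p => f p.1 p.2)]
    congr 1
    ext p
    simp [le_antisymm_iff, and_comm]
  rw [← Fintype.prod_prod_type', ← prod_filter_mul_prod_filter_not univ (fun p => p.1 < p.2),
    ← prod_filter_mul_prod_filter_not (univ.filter fun p : ι × ι => ¬p.1 < p.2)
      (fun p => p.2 < p.1), filter_filter, filter_filter, hgt, hdiag, sq, mul_assoc]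

theorem stmt_1_general (n : ℕ) (D : Fin n → ℕ) (ω : Fin n → Fin n → ℕ)
    (hsym : ∀ i j, ω i j = ω j i)
    (heven : ∀ i, Even (ω i i))
    (hdeg : ∀ i, D i = ∑ j, ω i j) :
    Nat.card {σ : Equiv.Perm (Σ i : Fin n, Fin (D i)) //
        (∀ x, σ (σ x) = x) ∧ (∀ x, σ x ≠ x) ∧
        ∀ i j : Fin n,
          Nat.card {x : Σ i' : Fin n, Fin (D i') // x.1 = i ∧ (σ x).1 = j} = ω i j} *
      ((∏ i, Nat.factorial (ω i i / 2) * 2 ^ (ω i i / 2)) *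
        ∏ p ∈ Finset.univ.filter (fun p : Fin n × Fin n => p.1 < p.2),
          Nat.factorial (ω p.1 p.2)) =
    ∏ i, Nat.factorial (D i) := by
  classical
  let IsGood (t : (Σ i : Fin n, Fin (D i)) → Fin n) : Prop :=
    ∀ i j, Nat.card (Block Sigma.fst t i j) = ω i j
  have hsplit := Nat.card_subtype_and_comp_eq_sum (fun σ : Perm (Σ i : Fin n, Fin (D i)) =>
    σ.IsPerfectMatching) IsGood (fun σ => Sigma.fst ∘ σ)
  have hgood : Nat.card {t // IsGood t} * ∏ i, ∏ j, (ω i j)! = ∏ i, (D i)! := by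
    rw [Nat.card_sigma_fun_fiber_card_eq_prod, ← prod_mul_distrib]
    refine prod_congr rfl fun i _ => ?_
    simpa using card_fun_fiber_card_eq_mul_prod_factorial (X := Fin (D i)) (ω i) (by simp [hdeg i])
  rw [prod_prod_eq_sq_mul_prod_diag (f := fun i j => (ω i j)!) fun i j => by rw [hsym],
    Nat.card_eq_fintype_card, Fintype.card_subtype] at hgood
  rw [Nat.card_congr (Equiv.subtypeEquivRight fun σ => and_assoc.symm)]
  change Nat.card {σ : Perm (Σ i : Fin n, Fin (D i)) //
    σ.IsPerfectMatching ∧ IsGood (Sigma.fst ∘ σ)} * _ = _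
  rw [hsplit, ← mul_assoc, sum_mul, sum_mul, sum_congr rfl fun t ht => by
    rw [card_perfectMatchingOver_mul hsym heven (mem_filter.1 ht).2], sum_const, smul_eq_mul,
    ← hgood]
  ring

/-- Counting perfect matchings of `W = ⨆ i W(i)` (`|W(i)| = D(i)`)
realizing a prescribed symmetric multiplicity matrix `ω` (with even diagonal and
`D(i) = ∑_j ω(i,j)`).  A perfect matching is encoded as a fixed-point-free involution
`σ`; the condition `#{x : x ∈ W(i), σ x ∈ W(j)} = ω i j` says that for `i < j` exactly
`ω(i,j)` pairs join `W(i)` and `W(j)`, and exactly `ω(i,i)/2` pairs lie inside `W(i)`.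
The number of such matchings times
`∏_i (ω(i,i)/2)! 2^{ω(i,i)/2} ∏_{i<j} ω(i,j)!` equals `∏_i D(i)!`. -/
theorem stmt_1 (n : ℕ) (D : Fin n → ℕ) (ω : Fin n → Fin n → ℕ)
    (hsym : ∀ i j, ω i j = ω j i)
    (heven : ∀ i, Even (ω i i))
    (hdeg : ∀ i, D i = ∑ j, ω i j)
    (hS : Even (∑ i, D i)) :
    Nat.card {σ : Equiv.Perm (Σ i : Fin n, Fin (D i)) //
        (∀ x, σ (σ x) = x) ∧ (∀ x, σ x ≠ x) ∧
        ∀ i j : Fin n,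
          Nat.card {x : Σ i' : Fin n, Fin (D i') // x.1 = i ∧ (σ x).1 = j} = ω i j} *
      ((∏ i, Nat.factorial (ω i i / 2) * 2 ^ (ω i i / 2)) *
        ∏ p ∈ Finset.univ.filter (fun p : Fin n × Fin n => p.1 < p.2),
          Nat.factorial (ω p.1 p.2)) =
    ∏ i, Nat.factorial (D i) :=
  stmt_1_general n D ω hsym heven hdeg
end

section
/- Let p, κ be positive integers and let A_κ be the set of probability measures P on ℤ^p such that E_P[ ∑_{i=1}^p |X_i| ] ≤ κ, where X = (X_1,…,X_p) has law P. If (P_n) is a sequence in A_κ converging weakly to P ∈ A_κ, then the Shannon entropies converge: H(P_n) → H(P). In other words, the map P ↦ H(P) is continuous on A_κ for the weak topology. -/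
/-!
Write `w(x) = ∑ᵢ |xᵢ|`. The elementary bound `-t log t ≤ c w t + e^{-c w}` controls the
entropy outside a finite set `A` by `c κ + ∑_{x ∉ A} e^{-c w(x)}`, uniformly on `A_κ`; since
`e^{-c w}` is summable on `ℤ^p` for every `c > 0`, choosing `c` small and then `A` large makes
these tails uniformly small, and on the finite set `A` the entropy converges termwise.
-/

open Filter Topology Real

theorem le_one_of_tsum_eq_one {β : Type*} {q : β → ℝ} (hq0 : ∀ x, 0 ≤ q x)
    (hq1 : ∑' x, q x = 1) (x : β) : q x ≤ 1 := by
  have hq : Summable q := by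
    by_contra h
    simp [tsum_eq_zero_of_not_summable h] at hq1
  exact hq1 ▸ hq.le_tsum x fun y _ => hq0 y

theorem tendsto_tsum_of_tendsto_of_tsum_compl_le {ι β : Type*} {l : Filter ι}
    {F : ι → β → ℝ} {G : β → ℝ} (hF : ∀ n, Summable (F n)) (hG : Summable G)
    (hlim : ∀ x, Tendsto (fun n => F n x) l (𝓝 (G x)))
    (htail : ∀ ε > 0, ∃ A : Finset β,
      (∀ n, |∑' x : {x // x ∉ A}, F n x| ≤ ε) ∧ |∑' x : {x // x ∉ A}, G x| ≤ ε) :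
    Tendsto (fun n => ∑' x, F n x) l (𝓝 (∑' x, G x)) := by
  rw [Metric.tendsto_nhds]
  intro ε hε
  obtain ⟨A, hFA, hGA⟩ := htail (ε / 3) (by positivity)
  have hA : Tendsto (fun n => ∑ x ∈ A, F n x) l (𝓝 (∑ x ∈ A, G x)) :=
    tendsto_finsetSum A fun x _ => hlim x
  filter_upwards [Metric.tendsto_nhds.mp hA (ε / 3) (by positivity)] with n hn
  have hFn : ∑ x ∈ A, F n x + ∑' x : {x // x ∉ A}, F n x = ∑' x, F n x :=
    (hF n).sum_add_tsum_compl
  have hGn : ∑ x ∈ A, G x + ∑' x : {x // x ∉ A}, G x = ∑' x, G x := hG.sum_add_tsum_compl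
  rw [Real.dist_eq] at hn ⊢
  obtain ⟨hFA₁, hFA₂⟩ := abs_le.mp (hFA n)
  obtain ⟨hGA₁, hGA₂⟩ := abs_le.mp hGA
  obtain ⟨hn₁, hn₂⟩ := abs_lt.mp hn
  rw [abs_lt]
  constructor <;> linarith

section Entropy

theorem negMulLog_le_mul_add_exp_neg {t : ℝ} (ht : 0 ≤ t) (s : ℝ) :
    negMulLog t ≤ s * t + exp (-s) := by
  rcases ht.eq_or_lt with rfl | ht
  · simpa using (exp_pos _).le
  calc negMulLog t = s * t + t * (-log t - s) := by rw [negMulLog]; ring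
    _ ≤ s * t + t * exp (-log t - s - 1) := by
        gcongr
        linarith [add_one_le_exp (-log t - s - 1)]
    _ = s * t + exp (-s - 1) := by
        rw [show -log t - s - 1 = -log t + (-s - 1) by ring, exp_add, exp_neg, exp_log ht,
          mul_inv_cancel_left₀ ht.ne']
    _ ≤ s * t + exp (-s) := by
        gcongr
        linarith

variable {β : Type*} {q w : β → ℝ} {c : ℝ}

theorem summable_negMulLog_of_summable_mul (hq0 : ∀ x, 0 ≤ q x) (hq1 : ∀ x, q x ≤ 1)
    (hqw : Summable fun x => q x * w x) (hexp : Summable fun x => exp (-(c * w x))) :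
    Summable fun x => negMulLog (q x) :=
  .of_nonneg_of_le (fun x => negMulLog_nonneg (hq0 x) (hq1 x))
    (fun x => (negMulLog_le_mul_add_exp_neg (hq0 x) (c * w x)).trans_eq (by ring))
    ((hqw.mul_left c).add hexp)

theorem tsum_compl_negMulLog_le (A : Finset β) (hq0 : ∀ x, 0 ≤ q x) (hq1 : ∀ x, q x ≤ 1)
    (hw0 : ∀ x, 0 ≤ w x) (hc : 0 ≤ c) (hqw : Summable fun x => q x * w x)
    (hexp : Summable fun x => exp (-(c * w x))) :
    ∑' x : {x // x ∉ A}, negMulLog (q x) ≤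
      c * ∑' x, q x * w x + ∑' x : {x // x ∉ A}, exp (-(c * w x)) := by
  have hqwA : Summable fun x : {x // x ∉ A} => c * (q x * w x) := (hqw.subtype _).mul_left c
  have hexpA : Summable fun x : {x // x ∉ A} => exp (-(c * w x)) := hexp.subtype _
  calc ∑' x : {x // x ∉ A}, negMulLog (q x)
      ≤ ∑' x : {x // x ∉ A}, (c * (q x * w x) + exp (-(c * w x))) :=
        Summable.tsum_le_tsum
          (fun x => (negMulLog_le_mul_add_exp_neg (hq0 x) (c * w x)).trans_eq (by ring))
          ((summable_negMulLog_of_summable_mul hq0 hq1 hqw hexp).subtype _) (hqwA.add hexpA)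
    _ = c * ∑' x : {x // x ∉ A}, q x * w x + ∑' x : {x // x ∉ A}, exp (-(c * w x)) := by
        rw [hqwA.tsum_add hexpA, tsum_mul_left]
    _ ≤ c * ∑' x, q x * w x + ∑' x : {x // x ∉ A}, exp (-(c * w x)) := by
        gcongr
        exact Summable.tsum_subtype_le _ {x | x ∉ A} (fun x => mul_nonneg (hq0 x) (hw0 x)) hqw

theorem exists_finset_forall_abs_tsum_compl_negMulLog_le (hw0 : ∀ x, 0 ≤ w x)
    (hw : ∀ c > 0, Summable fun x => exp (-(c * w x))) {κ : ℝ} (hκ : 0 ≤ κ)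
    {ε : ℝ} (hε : 0 < ε) :
    ∃ A : Finset β, ∀ q : β → ℝ, (∀ x, 0 ≤ q x) → (∀ x, q x ≤ 1) →
      Summable (fun x => q x * w x) → ∑' x, q x * w x ≤ κ →
      |∑' x : {x // x ∉ A}, negMulLog (q x)| ≤ ε := by
  set c := ε / (2 * (κ + 1)) with hc_def
  have hc : 0 < c := by positivity
  have hcκ : c * κ ≤ ε / 2 := by
    rw [hc_def, div_mul_eq_mul_div, div_le_div_iff₀ (by positivity) two_pos]
    nlinarith
  obtain ⟨A, hA⟩ := ((tendsto_tsum_compl_atTop_zero fun x => exp (-(c * w x))).eventually_le_const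
    (half_pos hε)).exists
  refine ⟨A, fun q hq0 hq1 hqw hqκ => ?_⟩
  rw [abs_of_nonneg (tsum_nonneg fun x : {x // x ∉ A} => negMulLog_nonneg (hq0 x) (hq1 x))]
  have := tsum_compl_negMulLog_le A hq0 hq1 hw0 hc.le hqw (hw c hc)
  have := mul_le_mul_of_nonneg_left hqκ hc.le
  linarith

end Entropy

theorem summable_pi_fin_prod {α : Type*} {f : α → ℝ} (hf0 : ∀ a, 0 ≤ f a) (hf : Summable f) :
    ∀ m : ℕ, Summable fun x : Fin m → α => ∏ i, f (x i)
  | 0 => .of_finite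
  | m + 1 => by
    have h : Summable fun y : α × (Fin m → α) => f y.1 * ∏ i, f (y.2 i) :=
      Summable.mul_of_nonneg (f := f) (g := fun x : Fin m → α => ∏ i, f (x i)) hf
        (summable_pi_fin_prod hf0 hf m) hf0 fun x => Finset.prod_nonneg fun i _ => hf0 _
    refine (Fin.consEquiv fun _ : Fin (m + 1) => α).summable_iff.mp (h.congr fun y => ?_)
    simp [Fin.consEquiv, Fin.prod_univ_succ]

theorem summable_exp_neg_mul_abs_int {c : ℝ} (hc : 0 < c) :
    Summable fun k : ℤ => exp (-(c * |(k : ℝ)|)) := by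
  have h : Summable fun n : ℕ => exp (n * -c) := summable_exp_nat_mul_iff.mpr (by linarith)
  apply Summable.of_nat_of_neg <;>
  · refine h.congr fun n => ?_
    push_cast [abs_neg, Nat.abs_cast]
    ring_nf

theorem summable_exp_neg_mul_sum_abs (p : ℕ) {c : ℝ} (hc : 0 < c) :
    Summable fun x : Fin p → ℤ => exp (-(c * ∑ i, |(x i : ℝ)|)) := by
  refine (summable_pi_fin_prod (fun k => (exp_pos _).le) (summable_exp_neg_mul_abs_int hc) p).congr
    fun x => ?_
  rw [← exp_sum, Finset.mul_sum, ← Finset.sum_neg_distrib]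

theorem stmt_7_general (p κ : ℕ)
    (Pn : ℕ → (Fin p → ℤ) → ℝ) (P : (Fin p → ℤ) → ℝ)
    (hPn0 : ∀ n x, 0 ≤ Pn n x) (hPn1 : ∀ n, ∑' x, Pn n x = 1)
    (hPnmom : ∀ n, Summable (fun x : Fin p → ℤ => Pn n x * ∑ i, |(x i : ℝ)|))
    (hPnκ : ∀ n, ∑' x : Fin p → ℤ, Pn n x * ∑ i, |(x i : ℝ)| ≤ κ)
    (hP0 : ∀ x, 0 ≤ P x) (hP1 : ∑' x, P x = 1)
    (hPmom : Summable (fun x : Fin p → ℤ => P x * ∑ i, |(x i : ℝ)|))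
    (hPκ : ∑' x : Fin p → ℤ, P x * ∑ i, |(x i : ℝ)| ≤ κ)
    (hconv : ∀ x, Tendsto (fun n => Pn n x) atTop (nhds (P x))) :
    Tendsto (fun n => ∑' x : Fin p → ℤ, -(Pn n x * Real.log (Pn n x)))
      atTop (nhds (∑' x : Fin p → ℤ, -(P x * Real.log (P x)))) := by
  have hPn1' n := le_one_of_tsum_eq_one (hPn0 n) (hPn1 n)
  have hP1' := le_one_of_tsum_eq_one hP0 hP1
  have hexp := summable_exp_neg_mul_sum_abs p one_pos
  suffices Tendsto (fun n => ∑' x, negMulLog (Pn n x)) atTop (𝓝 (∑' x, negMulLog (P x))) by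
    simpa only [negMulLog_eq_neg] using this
  refine tendsto_tsum_of_tendsto_of_tsum_compl_le
    (fun n => summable_negMulLog_of_summable_mul (hPn0 n) (hPn1' n) (hPnmom n) hexp)
    (summable_negMulLog_of_summable_mul hP0 hP1' hPmom hexp)
    (fun x => (continuous_negMulLog.tendsto _).comp (hconv x)) fun ε hε => ?_
  obtain ⟨A, hA⟩ := exists_finset_forall_abs_tsum_compl_negMulLog_le
    (fun x => Finset.sum_nonneg fun i _ => abs_nonneg (x i : ℝ))
    (fun c hc => summable_exp_neg_mul_sum_abs p hc) κ.cast_nonneg hε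
  exact ⟨A, fun n => hA _ (hPn0 n) (hPn1' n) (hPnmom n) (hPnκ n), hA _ hP0 hP1' hPmom hPκ⟩

/-- Let `p, κ` be positive integers and `A_κ` the set of probability
measures `P` on `ℤ^p` with `E_P[∑_i |X_i|] ≤ κ`.  If `(P_n) ⊆ A_κ` converges weakly
(pointwise) to `P ∈ A_κ`, then the Shannon entropies converge: `H(P_n) → H(P)`. -/
theorem stmt_7 (p κ : ℕ) (hp : 0 < p) (hκ : 0 < κ)
    (Pn : ℕ → (Fin p → ℤ) → ℝ) (P : (Fin p → ℤ) → ℝ)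
    (hPn0 : ∀ n x, 0 ≤ Pn n x) (hPn1 : ∀ n, ∑' x, Pn n x = 1)
    (hPnmom : ∀ n, Summable (fun x : Fin p → ℤ => Pn n x * ∑ i, |(x i : ℝ)|))
    (hPnκ : ∀ n, ∑' x : Fin p → ℤ, Pn n x * ∑ i, |(x i : ℝ)| ≤ κ)
    (hP0 : ∀ x, 0 ≤ P x) (hP1 : ∑' x, P x = 1)
    (hPmom : Summable (fun x : Fin p → ℤ => P x * ∑ i, |(x i : ℝ)|))
    (hPκ : ∑' x : Fin p → ℤ, P x * ∑ i, |(x i : ℝ)| ≤ κ)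
    (hconv : ∀ x, Tendsto (fun n => Pn n x) atTop (nhds (P x))) :
    Tendsto (fun n => ∑' x : Fin p → ℤ, -(Pn n x * Real.log (Pn n x)))
      atTop (nhds (∑' x : Fin p → ℤ, -(P x * Real.log (P x)))) :=
  stmt_7_general p κ Pn P hPn0 hPn1 hPnmom hPnκ hP0 hP1 hPmom hPκ hconv
end

section
/- If P is a probability measure on the nonnegative integers with finite mean ∑_{n≥0} n P(n) < ∞, then its Shannon entropy is finite: H(P) = −∑_{n≥0} P(n) log P(n) < ∞. -/
/-- Elementary bound: `-(p * log p) ≤ 2 * sqrt p` for `0 ≤ p`. -/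
lemma neg_mul_log_le_two_sqrt {p : ℝ} (hp : 0 ≤ p) :
    -(p * Real.log p) ≤ 2 * Real.sqrt p := by
  rcases eq_or_lt_of_le hp with h | h
  · simp [← h]
  · have hs : 0 < Real.sqrt p := Real.sqrt_pos.mpr h
    have hlog : Real.log (1 / Real.sqrt p) ≤ 1 / Real.sqrt p - 1 :=
      Real.log_le_sub_one_of_pos (by positivity)
    have h1 : -Real.log p = 2 * Real.log (1 / Real.sqrt p) := by
      rw [Real.log_div one_ne_zero hs.ne', Real.log_one, Real.log_sqrt hp]
      ring
    have h2 : -(p * Real.log p) ≤ p * (2 * (1 / Real.sqrt p)) := by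
      rw [neg_mul_eq_mul_neg, h1]
      apply mul_le_mul_of_nonneg_left _ hp
      nlinarith [hlog, hs]
    calc -(p * Real.log p) ≤ p * (2 * (1 / Real.sqrt p)) := h2
      _ = 2 * (p / Real.sqrt p) := by ring
      _ = 2 * Real.sqrt p := by rw [Real.div_sqrt]

/-- If `P` is a probability measure on `ℕ` with finite mean
`∑ n P(n) < ∞`, then its Shannon entropy is finite, i.e. the nonnegative family
`-(P(n) log P(n))` is summable. -/
theorem stmt_8 (P : ℕ → ℝ) (hP0 : ∀ n, 0 ≤ P n) (hP1 : ∑' n, P n = 1)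
    (hmean : Summable (fun n : ℕ => (n : ℝ) * P n)) :
    Summable (fun n : ℕ => -(P n * Real.log (P n))) := by
  have hPs : Summable P := by
    by_contra h
    rw [tsum_eq_zero_of_not_summable h] at hP1
    norm_num at hP1
  have hPle1 : ∀ n, P n ≤ 1 := by
    intro n
    calc P n ≤ ∑' m, P m := Summable.le_tsum hPs n (fun m _ => hP0 m)
      _ = 1 := hP1
  have hgeo : Summable (fun n : ℕ => 2 * Real.exp (-(1/2 : ℝ)) ^ n) := by
    apply Summable.mul_left
    exact summable_geometric_of_lt_one (Real.exp_nonneg _)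
      (Real.exp_lt_one_iff.mpr (by norm_num))
  refine Summable.of_nonneg_of_le ?_ ?_ (hmean.add hgeo)
  · intro n
    have : P n * Real.log (P n) ≤ 0 :=
      mul_nonpos_of_nonneg_of_nonpos (hP0 n) (Real.log_nonpos (hP0 n) (hPle1 n))
    linarith
  · intro n
    have hterm0 : (0:ℝ) ≤ (n : ℝ) * P n := mul_nonneg (Nat.cast_nonneg n) (hP0 n)
    have hgeo0 : (0:ℝ) ≤ 2 * Real.exp (-(1/2 : ℝ)) ^ n := by positivity
    rcases le_or_gt (P n) (Real.exp (-(n : ℝ))) with h | h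
    · have h1 : -(P n * Real.log (P n)) ≤ 2 * Real.sqrt (P n) :=
        neg_mul_log_le_two_sqrt (hP0 n)
      have h2 : Real.sqrt (P n) ≤ Real.exp (-(1/2 : ℝ)) ^ n := by
        have : Real.sqrt (P n) ≤ Real.sqrt (Real.exp (-(n : ℝ))) :=
          Real.sqrt_le_sqrt h
        calc Real.sqrt (P n) ≤ Real.sqrt (Real.exp (-(n : ℝ))) := this
          _ = Real.exp (-(n : ℝ) / 2) := by
            have : Real.exp (-(n : ℝ)) = Real.exp (-(n : ℝ) / 2) ^ 2 := by
              rw [sq, ← Real.exp_add]; ring_nf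
            rw [this, Real.sqrt_sq (Real.exp_nonneg _)]
          _ = Real.exp (-(1/2 : ℝ)) ^ n := by
            rw [← Real.exp_nat_mul]
            ring_nf
      linarith
    · have hp : 0 < P n := lt_of_le_of_lt (Real.exp_pos _).le h
      have hlog : -(n : ℝ) < Real.log (P n) := (Real.lt_log_iff_exp_lt hp).mpr h
      have : -(P n * Real.log (P n)) ≤ (n : ℝ) * P n := by
        rw [neg_mul_eq_mul_neg]
        calc P n * -Real.log (P n) ≤ P n * (n : ℝ) :=
          mul_le_mul_of_nonneg_left (by linarith) (hP0 n)
          _ = (n : ℝ) * P n := mul_comm _ _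
      linarith
end

section
/- Let W and W̄ be finite sets of common cardinality N and let σ be a uniformly random bijection from W to W̄. Let F be a real-valued function on the set of bijections from W to W̄ such that |F(m) − F(m')| ≤ κ for some κ > 0 whenever m' ∘ m^{−1} is a transposition. Then for every t ≥ 0, P( F(σ) − E F(σ) ≥ t ) ≤ exp( − t² / (2 N κ²) ). -/
/-!
Fix `a ∈ W` and condition on the image `x = σ a`. Post-composing with the transposition `(x y)`
is a bijection between the fibres `{σ a = x}` and `{σ a = y}` moving `F` by at most `κ`, so the
fibre means of `F` lie within `κ` of each other, hence of the global mean. Hoeffding's lemma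
bounds the exponential moment of the fibre means by `exp (λ²κ²/2)`, and each fibre is the set of
bijections between the complements of `a` and `x`, on which `F` is again `κ`-Lipschitz for
transpositions. By induction `E exp (λ (F - E F)) ≤ exp (N λ² κ² / 2)`, and the Chernoff bound
with `λ = t / (N κ²)` gives the claim.
-/

open Finset Real
open scoped BigOperators

lemma exp_mul_le_cosh_add_mul_sinh {κ x : ℝ} (hκ : 0 < κ) (hx : |x| ≤ κ) (l : ℝ) :
    exp (l * x) ≤ cosh (l * κ) + x / κ * sinh (l * κ) := by
  obtain ⟨hx₁, hx₂⟩ := abs_le.1 hx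
  have hconv : exp (((κ - x) / (2 * κ)) • (-(l * κ)) + ((κ + x) / (2 * κ)) • (l * κ)) ≤
      ((κ - x) / (2 * κ)) • exp (-(l * κ)) + ((κ + x) / (2 * κ)) • exp (l * κ) :=
    convexOn_exp.2 (Set.mem_univ _) (Set.mem_univ _)
      (div_nonneg (by linarith) (by linarith)) (div_nonneg (by linarith) (by linarith))
      (by field_simp; ring)
  convert hconv using 1
  · congr 1; simp only [smul_eq_mul]; field_simp; ring
  · rw [cosh_eq, sinh_eq]; simp only [smul_eq_mul]; field_simp; ring

lemma Fintype.expect_eq_expect_fiberwise {ι κ M : Type*} [Fintype ι] [Fintype κ] [DecidableEq κ]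
    [Semifield M] [CharZero M] (f : ι → κ)
    (hc : ∀ j j', Fintype.card {i // f i = j} = Fintype.card {i // f i = j'})
    (G : ι → M) : 𝔼 i, G i = 𝔼 j, 𝔼 i : {i // f i = j}, G i := by
  rcases isEmpty_or_nonempty κ with hκ | ⟨⟨j₀⟩⟩
  · have : IsEmpty ι := f.isEmpty
    simp
  set c := Fintype.card {i // f i = j₀}
  replace hc : ∀ j, Fintype.card {i // f i = j} = c := fun j ↦ hc j j₀
  have hcard : Fintype.card ι = Fintype.card κ * c := by
    rw [Fintype.card_congr (Equiv.sigmaFiberEquiv f).symm, Fintype.card_sigma]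
    simp [hc]
  simp only [Fintype.expect_eq_sum_div_card, hc, ← sum_div, hcard, Nat.cast_mul, div_div,
    mul_comm (c : M), Fintype.sum_fiberwise f G]

lemma abs_expect_le_of_abs_le {ι : Type*} [Fintype ι] {g : ι → ℝ} {κ : ℝ} (hκ : 0 ≤ κ)
    (hg : ∀ i, |g i| ≤ κ) : |𝔼 i, g i| ≤ κ := by
  refine (abs_expect_le _ _).trans ?_
  rcases isEmpty_or_nonempty ι with _ | _
  · simpa using hκ
  · exact expect_le univ_nonempty fun i _ ↦ hg i

lemma abs_sub_expect_le {ι : Type*} [Fintype ι] {f : ι → ℝ} {κ : ℝ}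
    (hf : ∀ i j, |f i - f j| ≤ κ) (i : ι) : |f i - 𝔼 j, f j| ≤ κ := by
  have : Nonempty ι := ⟨i⟩
  rw [← Fintype.expect_const (ι := ι) (f i), ← expect_sub_distrib]
  exact abs_expect_le_of_abs_le ((abs_nonneg _).trans (hf i i)) (hf i)

/-- Hoeffding's lemma for the uniform distribution on a finite type. -/
lemma expect_exp_mul_sub_expect_le {ι : Type*} [Fintype ι] {f : ι → ℝ} {κ : ℝ} (hκ : 0 < κ)
    (hf : ∀ i, |f i - 𝔼 j, f j| ≤ κ) (l : ℝ) :
    𝔼 i, exp (l * (f i - 𝔼 j, f j)) ≤ exp (l ^ 2 * κ ^ 2 / 2) := by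
  rcases isEmpty_or_nonempty ι with _ | _
  · simp [exp_nonneg]
  calc 𝔼 i, exp (l * (f i - 𝔼 j, f j))
      ≤ 𝔼 i, (cosh (l * κ) + (f i - 𝔼 j, f j) / κ * sinh (l * κ)) :=
        expect_le_expect fun i _ ↦ exp_mul_le_cosh_add_mul_sinh hκ (hf i) l
    _ = cosh (l * κ) := by
        simp only [expect_add_distrib, ← expect_mul, ← expect_div, expect_sub_distrib,
          Fintype.expect_const, sub_self]
        simp
    _ ≤ exp (l ^ 2 * κ ^ 2 / 2) := by simpa [mul_pow] using cosh_le_exp_half_sq (l * κ)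

namespace Equiv

variable {α β : Type*} [DecidableEq α] [DecidableEq β]

def SwapLipschitzWith (κ : ℝ) (F : (α ≃ β) → ℝ) : Prop :=
  ∀ m m' : α ≃ β, (∃ x y : β, x ≠ y ∧ m.symm.trans m' = swap x y) → |F m - F m'| ≤ κ

def extendSubtypeNe {a : α} {b : β} (τ : {a' // a' ≠ a} ≃ {b' // b' ≠ b}) : α ≃ β :=
  (optionSubtypeNe a).symm.trans (τ.optionCongr.trans (optionSubtypeNe b))

@[simp]
lemma extendSubtypeNe_apply_self {a : α} {b : β} (τ : {a' // a' ≠ a} ≃ {b' // b' ≠ b}) :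
    extendSubtypeNe τ a = b := by
  simp [extendSubtypeNe]

lemma extendSubtypeNe_apply_coe {a : α} {b : β} (τ : {a' // a' ≠ a} ≃ {b' // b' ≠ b})
    (u : {a' // a' ≠ a}) : extendSubtypeNe τ u = τ u := by
  simp [extendSubtypeNe, optionSubtypeNe_symm_of_ne u.2]

lemma extendSubtypeNe_symm_trans {a : α} {b : β} (τ τ' : {a' // a' ≠ a} ≃ {b' // b' ≠ b}) :
    (extendSubtypeNe τ).symm.trans (extendSubtypeNe τ') =
      (optionSubtypeNe b).symm.trans ((τ.symm.trans τ').optionCongr.trans (optionSubtypeNe b)) := by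
  simp only [extendSubtypeNe, symm_trans, symm_symm, optionCongr_symm, optionCongr_trans,
    trans_assoc]
  rw [← trans_assoc (optionSubtypeNe a), self_trans_symm, refl_trans]

lemma SwapLipschitzWith.comp_extendSubtypeNe {κ : ℝ} {F : (α ≃ β) → ℝ}
    (hF : SwapLipschitzWith κ F) (a : α) (b : β) :
    SwapLipschitzWith κ (fun τ : {a' // a' ≠ a} ≃ {b' // b' ≠ b} ↦ F (extendSubtypeNe τ)) := by
  rintro τ τ' ⟨x, y, hxy, h⟩
  refine hF _ _ ⟨x, y, Subtype.coe_injective.ne hxy, ?_⟩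
  rw [extendSubtypeNe_symm_trans, h, optionCongr_swap, ← trans_assoc, symm_trans_swap_trans]
  rfl

def subtypeApplyEqEquiv (a : α) (b : β) :
    {σ : α ≃ β // σ a = b} ≃ ({a' // a' ≠ a} ≃ {b' // b' ≠ b}) where
  toFun σ := σ.1.subtypeEquiv fun _ ↦ (σ.1.injective.ne_iff' σ.2).symm
  invFun τ := ⟨extendSubtypeNe τ, extendSubtypeNe_apply_self τ⟩
  left_inv σ := by
    ext u
    by_cases hu : u = a
    · simp [hu, σ.2]
    · exact extendSubtypeNe_apply_coe _ ⟨u, hu⟩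
  right_inv τ := by
    ext u
    simp [extendSubtypeNe_apply_coe]

def subtypeApplyEqSwapEquiv (a : α) (x y : β) :
    {σ : α ≃ β // σ a = x} ≃ {σ : α ≃ β // σ a = y} :=
  ((Equiv.refl α).equivCongr (swap x y)).subtypeEquiv fun σ ↦ by simp [swap_apply_eq_iff]

variable [Fintype α] [Fintype β]

lemma card_subtypeApplyEq_eq (a : α) (x y : β) :
    Fintype.card {σ : α ≃ β // σ a = x} = Fintype.card {σ : α ≃ β // σ a = y} :=
  Fintype.card_congr (subtypeApplyEqSwapEquiv a x y)

lemma expect_subtypeApplyEq {M : Type*} [AddCommMonoid M] [Module ℚ≥0 M] (G : (α ≃ β) → M)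
    (a : α) (b : β) :
    𝔼 σ : {σ : α ≃ β // σ a = b}, G σ =
      𝔼 τ : {a' // a' ≠ a} ≃ {b' // b' ≠ b}, G (extendSubtypeNe τ) :=
  Fintype.expect_equiv (subtypeApplyEqEquiv a b) _ _ fun σ ↦
    congrArg (G ∘ Subtype.val) ((subtypeApplyEqEquiv a b).symm_apply_apply σ).symm

lemma SwapLipschitzWith.abs_expect_subtypeApplyEq_sub_le {κ : ℝ} (hκ : 0 ≤ κ)
    {F : (α ≃ β) → ℝ} (hF : SwapLipschitzWith κ F) (a : α) (x y : β) :
    |𝔼 σ : {σ : α ≃ β // σ a = x}, F σ - 𝔼 σ : {σ : α ≃ β // σ a = y}, F σ| ≤ κ := by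
  rcases eq_or_ne x y with rfl | hxy
  · simpa using hκ
  set e := subtypeApplyEqSwapEquiv a x y
  rw [← Fintype.expect_equiv e (fun σ ↦ F (e σ)) (fun σ ↦ F σ) fun _ ↦ rfl, ← expect_sub_distrib]
  refine abs_expect_le_of_abs_le hκ fun σ ↦ hF _ _ ⟨x, y, hxy, ?_⟩
  ext v
  simp [e, subtypeApplyEqSwapEquiv]

theorem SwapLipschitzWith.expect_exp_mul_sub_expect_le {κ : ℝ} (hκ : 0 < κ)
    {F : (α ≃ β) → ℝ} (hF : SwapLipschitzWith κ F) (l : ℝ) :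
    𝔼 σ, exp (l * (F σ - 𝔼 σ', F σ')) ≤ exp (Fintype.card α * (l ^ 2 * κ ^ 2 / 2)) := by
  obtain ⟨n, hn⟩ : ∃ n, Fintype.card α = n := ⟨_, rfl⟩
  induction n generalizing α β with
  | zero =>
    have : IsEmpty α := Fintype.card_eq_zero_iff.1 hn
    rcases isEmpty_or_nonempty (α ≃ β) with _ | ⟨⟨σ₀⟩⟩
    · simp
    have hconst : ∀ σ, F σ = F σ₀ := fun σ ↦ congrArg F (Subsingleton.elim σ σ₀)
    have : Nonempty (α ≃ β) := ⟨σ₀⟩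
    simp [hconst]
  | succ n ih =>
    obtain ⟨a⟩ : Nonempty α := Fintype.card_pos_iff.1 (by omega)
    set μ : β → ℝ := fun x ↦ 𝔼 σ : {σ : α ≃ β // σ a = x}, F σ
    have hfiber := Fintype.expect_eq_expect_fiberwise (M := ℝ) (fun σ : α ≃ β ↦ σ a)
      (card_subtypeApplyEq_eq a)
    have hmean : 𝔼 σ, F σ = 𝔼 x, μ x := hfiber F
    have hcard : Fintype.card {a' // a' ≠ a} = n := by simp [hn]
    have hstep : ∀ x, 𝔼 σ : {σ : α ≃ β // σ a = x}, exp (l * (F σ - μ x)) ≤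
        exp (n * (l ^ 2 * κ ^ 2 / 2)) := fun x ↦ by
      have := ih (hF.comp_extendSubtypeNe a x) hcard
      rw [hcard] at this
      rw [expect_subtypeApplyEq (fun σ ↦ exp (l * (F σ - μ x)))]
      simpa only [μ, expect_subtypeApplyEq] using this
    have hcentered : ∀ x, |μ x - 𝔼 y, μ y| ≤ κ :=
      abs_sub_expect_le fun x y ↦ hF.abs_expect_subtypeApplyEq_sub_le hκ.le a x y
    calc 𝔼 σ, exp (l * (F σ - 𝔼 σ', F σ'))
        = 𝔼 x, exp (l * (μ x - 𝔼 y, μ y)) *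
            𝔼 σ : {σ : α ≃ β // σ a = x}, exp (l * (F σ - μ x)) := by
          rw [hfiber, hmean]
          refine expect_congr rfl fun x _ ↦ ?_
          rw [mul_expect]
          refine expect_congr rfl fun σ _ ↦ ?_
          rw [← exp_add]
          ring_nf
      _ ≤ 𝔼 x, exp (l * (μ x - 𝔼 y, μ y)) * exp (n * (l ^ 2 * κ ^ 2 / 2)) :=
          expect_le_expect fun x _ ↦ mul_le_mul_of_nonneg_left (hstep x) (exp_pos _).le
      _ = (𝔼 x, exp (l * (μ x - 𝔼 y, μ y))) * exp (n * (l ^ 2 * κ ^ 2 / 2)) :=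
          (expect_mul _ _ _).symm
      _ ≤ exp (l ^ 2 * κ ^ 2 / 2) * exp (n * (l ^ 2 * κ ^ 2 / 2)) :=
          mul_le_mul_of_nonneg_right (expect_exp_mul_sub_expect_le hκ hcentered l) (exp_pos _).le
      _ = exp (Fintype.card α * (l ^ 2 * κ ^ 2 / 2)) := by
          rw [← exp_add, hn]
          push_cast
          ring_nf

end Equiv

lemma Fintype.card_subtype_le_div_card_le {ι : Type*} [Fintype ι] (G : ι → ℝ) {l : ℝ}
    (hl : 0 ≤ l) (t : ℝ) :
    (Fintype.card {i // t ≤ G i} : ℝ) / Fintype.card ι ≤ exp (-(l * t)) * 𝔼 i, exp (l * G i) := by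
  classical
  rw [Fintype.card_subtype, card_filter, Nat.cast_sum, Fintype.expect_eq_sum_div_card,
    mul_div_assoc', mul_sum]
  refine div_le_div_of_nonneg_right (sum_le_sum fun i _ ↦ ?_) (Nat.cast_nonneg _)
  split_ifs with h
  · rw [Nat.cast_one, ← exp_add, one_le_exp_iff]
    nlinarith
  · rw [Nat.cast_zero]
    positivity

theorem stmt_11_general (W Wb : Type*) [Finite W] [Finite Wb] [DecidableEq Wb] (N : ℕ)
    (hW : Nat.card W = N) (κ : ℝ) (hκ : 0 < κ)
    (F : (W ≃ Wb) → ℝ)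
    (hF : ∀ m m' : W ≃ Wb,
      (∃ x y : Wb, x ≠ y ∧ m.symm.trans m' = Equiv.swap x y) → |F m - F m'| ≤ κ)
    (t : ℝ) (ht : 0 ≤ t) :
    (Nat.card {σ : W ≃ Wb //
        t ≤ F σ - (∑' σ' : W ≃ Wb, F σ') / (Nat.card (W ≃ Wb) : ℝ)} : ℝ) /
      (Nat.card (W ≃ Wb) : ℝ) ≤
    Real.exp (-(t ^ 2) / (2 * N * κ ^ 2)) := by
  classical
  cases nonempty_fintype W
  cases nonempty_fintype Wb
  rw [Nat.card_eq_fintype_card] at hW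
  simp only [Nat.card_eq_fintype_card, tsum_fintype, ← Fintype.expect_eq_sum_div_card]
  set l := t / (N * κ ^ 2) with hl
  have hmgf := Equiv.SwapLipschitzWith.expect_exp_mul_sub_expect_le (F := F) hκ hF l
  rw [hW] at hmgf
  calc _ ≤ exp (-(l * t)) * 𝔼 σ, exp (l * (F σ - 𝔼 σ', F σ')) :=
        Fintype.card_subtype_le_div_card_le _ (by positivity) t
    _ ≤ exp (-(l * t)) * exp (N * (l ^ 2 * κ ^ 2 / 2)) := by gcongr
    _ = exp (-(t ^ 2) / (2 * N * κ ^ 2)) := by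
        rw [← exp_add]
        congr 1
        rcases eq_or_ne N 0 with rfl | hN
        · simp [l]
        · rw [hl]
          field_simp
          ring

/-- Let `W`, `W̄` be finite sets of common cardinality `N` and `σ` a
uniformly random bijection `W → W̄`.  If `F` on bijections satisfies
`|F(m) − F(m')| ≤ κ` whenever `m' ∘ m⁻¹` is a transposition, then for `t ≥ 0`,
`P(F(σ) − E F(σ) ≥ t) ≤ exp(−t²/(2Nκ²))`. -/
theorem stmt_11 (W Wb : Type*) [Finite W] [Finite Wb] [DecidableEq Wb] (N : ℕ)
    (hW : Nat.card W = N) (hWb : Nat.card Wb = N) (κ : ℝ) (hκ : 0 < κ)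
    (F : (W ≃ Wb) → ℝ)
    (hF : ∀ m m' : W ≃ Wb,
      (∃ x y : Wb, x ≠ y ∧ m.symm.trans m' = Equiv.swap x y) → |F m - F m'| ≤ κ)
    (t : ℝ) (ht : 0 ≤ t) :
    (Nat.card {σ : W ≃ Wb //
        t ≤ F σ - (∑' σ' : W ≃ Wb, F σ') / (Nat.card (W ≃ Wb) : ℝ)} : ℝ) /
      (Nat.card (W ≃ Wb) : ℝ) ≤
    Real.exp (-(t ^ 2) / (2 * N * κ ^ 2)) :=
  stmt_11_general W Wb N hW κ hκ F hF t ht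
end

section
/- Let W be a finite set of even cardinality N, let Σ be the set of perfect matchings of W, and let σ be uniformly distributed on Σ. Let F : Σ → ℝ be such that |F(m) − F(m')| ≤ κ for some κ > 0 whenever m, m' ∈ Σ differ by at most one switch, i.e. there is a set J ⊆ W with |J| ≤ 4 such that every pair of m not meeting J is also a pair of m'. Then for every t > 0, P( F(σ) − E F(σ) ≥ t ) ≤ exp( − t² / (N κ²) ). -/
/-!
Reveal the partner `σ w` of one point `w`. Given `σ w = x`, the matching `σ` is `swap w x`
times a uniform matching of `W \ {w, x}`, and conjugating by `swap x y` is a switch carrying the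
matchings with `σ w = x` onto those with `σ w = y`; hence the conditional expectations
`E[F | σ w]` lie within `κ` of each other and of `E F`. Hoeffding's lemma bounds the exponential
moment of this increment by `exp (u²κ²/2)`, and induction over the `N / 2` revealed pairs gives
`E exp (u (F - E F)) ≤ exp (u² N κ² / 4)`. Chernoff's bound with `u = 2t / (N κ²)` concludes.
-/

/-- Perfect matchings of `W`, encoded as fixed-point-free involutions. -/
abbrev PerfMatching (W : Type*) : Type _ :=
  {σ : Equiv.Perm W // (∀ x, σ (σ x) = x) ∧ ∀ x, σ x ≠ x}

open Finset Equiv Real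
open scoped BigOperators

section Hoeffding

lemma exp_mul_le_of_abs_le {c v : ℝ} (hc : 0 < c) (hv : |v| ≤ c) (u : ℝ) :
    exp (u * v) ≤ ((c - v) * exp (-(u * c)) + (c + v) * exp (u * c)) / (2 * c) := by
  obtain ⟨hlo, hhi⟩ := abs_le.1 hv
  have key := convexOn_exp.2 (Set.mem_univ (-(u * c))) (Set.mem_univ (u * c))
    (div_nonneg (a := c - v) (b := 2 * c) (by linarith) (by positivity))
    (div_nonneg (a := c + v) (b := 2 * c) (by linarith) (by positivity)) (by field_simp; ring)
  simp only [smul_eq_mul] at key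
  calc exp (u * v) = exp ((c - v) / (2 * c) * -(u * c) + (c + v) / (2 * c) * (u * c)) := by
        congr 1; field_simp; ring
    _ ≤ (c - v) / (2 * c) * exp (-(u * c)) + (c + v) / (2 * c) * exp (u * c) := key
    _ = ((c - v) * exp (-(u * c)) + (c + v) * exp (u * c)) / (2 * c) := by ring

lemma expect_exp_mul_le_of_abs_le {ι : Type*} {s : Finset ι} {v : ι → ℝ} {c : ℝ} (hc : 0 < c)
    (hv : ∀ i ∈ s, |v i| ≤ c) (hmean : 𝔼 i ∈ s, v i = 0) (u : ℝ) :
    𝔼 i ∈ s, exp (u * v i) ≤ exp (u ^ 2 * c ^ 2 / 2) := by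
  rcases s.eq_empty_or_nonempty with rfl | hs
  · simp only [expect_empty]; positivity
  calc 𝔼 i ∈ s, exp (u * v i)
      ≤ 𝔼 i ∈ s, (cosh (u * c) + v i * ((exp (u * c) - exp (-(u * c))) / (2 * c))) := by
        refine expect_le_expect fun i hi => (exp_mul_le_of_abs_le hc (hv i hi) u).trans_eq ?_
        rw [cosh_eq]; field_simp; ring
    _ = cosh (u * c) := by
        rw [expect_add_distrib, expect_const hs, ← expect_mul, hmean, zero_mul, add_zero]
    _ ≤ exp (u ^ 2 * c ^ 2 / 2) := by
        rw [← mul_pow]; exact cosh_le_exp_half_sq _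

end Hoeffding

section UniformAverages

variable {α ι : Type*} [DecidableEq ι]

lemma abs_sub_expect_le_s12 {s : Finset α} (hs : s.Nonempty) {f : α → ℝ} {x c : ℝ}
    (h : ∀ i ∈ s, |x - f i| ≤ c) : |x - 𝔼 i ∈ s, f i| ≤ c := by
  rw [← expect_const hs x, ← expect_sub_distrib]
  exact (abs_expect_le _ _).trans (expect_le hs h)

noncomputable def condExpect (M : Finset α) (X : α → ι) (G : α → ℝ) (a : α) : ℝ :=
  𝔼 b ∈ M with X b = X a, G b

lemma sum_condExpect (M : Finset α) (X : α → ι) (G : α → ℝ) :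
    ∑ a ∈ M, condExpect M X G a = ∑ a ∈ M, G a := by
  have hX : ∀ a ∈ M, X a ∈ M.image X := fun a ha => mem_image_of_mem X ha
  rw [← sum_fiberwise_of_maps_to hX, ← sum_fiberwise_of_maps_to hX G]
  refine sum_congr rfl fun j _ => ?_
  rw [sum_congr rfl (g := fun _ => 𝔼 b ∈ M with X b = j, G b), sum_const, card_smul_expect]
  intro a ha
  rw [condExpect, (mem_filter.1 ha).2]

lemma expect_condExpect (M : Finset α) (X : α → ι) (G : α → ℝ) :
    𝔼 a ∈ M, condExpect M X G a = 𝔼 a ∈ M, G a := by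
  rw [expect_eq_sum_div_card, expect_eq_sum_div_card, sum_condExpect]

lemma expect_exp_sub_expect_le {M : Finset α} {X : α → ι} (G : α → ℝ) (u : ℝ) {κ C : ℝ}
    (hκ : 0 < κ) (hC : 0 ≤ C)
    (hfiber : ∀ a ∈ M, 𝔼 b ∈ M with X b = X a, exp (u * (G b - condExpect M X G a)) ≤ C)
    (hclose : ∀ a ∈ M, ∀ b ∈ M, |condExpect M X G a - condExpect M X G b| ≤ κ) :
    𝔼 a ∈ M, exp (u * (G a - 𝔼 b ∈ M, G b)) ≤ C * exp (u ^ 2 * κ ^ 2 / 2) := by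
  rcases M.eq_empty_or_nonempty with rfl | hM
  · simp only [expect_empty]; positivity
  set μ := 𝔼 b ∈ M, G b
  set g := condExpect M X G
  have hdev : ∀ a ∈ M, |g a - μ| ≤ κ := fun a ha => by
    rw [show μ = 𝔼 b ∈ M, g b from (expect_condExpect M X G).symm]
    exact abs_sub_expect_le_s12 hM (hclose a ha)
  have hmean : 𝔼 a ∈ M, (g a - μ) = 0 := by
    rw [expect_sub_distrib, expect_condExpect, expect_const hM, sub_self]
  calc 𝔼 a ∈ M, exp (u * (G a - μ))
      = 𝔼 a ∈ M, condExpect M X (fun b => exp (u * (G b - μ))) a := (expect_condExpect ..).symm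
    _ = 𝔼 a ∈ M, exp (u * (g a - μ)) * 𝔼 b ∈ M with X b = X a, exp (u * (G b - g a)) := by
        refine expect_congr rfl fun a _ => ?_
        rw [condExpect, mul_expect]
        refine expect_congr rfl fun b _ => ?_
        rw [← exp_add]; ring_nf
    _ ≤ 𝔼 a ∈ M, exp (u * (g a - μ)) * C :=
        expect_le_expect fun a ha => mul_le_mul_of_nonneg_left (hfiber a ha) (exp_pos _).le
    _ = (𝔼 a ∈ M, exp (u * (g a - μ))) * C := (expect_mul ..).symm
    _ ≤ exp (u ^ 2 * κ ^ 2 / 2) * C :=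
        mul_le_mul_of_nonneg_right (expect_exp_mul_le_of_abs_le hκ hdev hmean u) hC
    _ = C * exp (u ^ 2 * κ ^ 2 / 2) := mul_comm _ _

lemma card_filter_le_div_card_le (s : Finset α) (h : α → ℝ) (t : ℝ) {u : ℝ} (hu : 0 ≤ u) :
    (#{i ∈ s | t ≤ h i} : ℝ) / #s ≤ exp (-(u * t)) * 𝔼 i ∈ s, exp (u * h i) := by
  have hmarkov : #{i ∈ s | t ≤ h i} * exp (u * t) ≤ ∑ i ∈ s, exp (u * h i) :=
    calc #{i ∈ s | t ≤ h i} * exp (u * t) = #{i ∈ s | t ≤ h i} • exp (u * t) :=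
          (nsmul_eq_mul ..).symm
      _ ≤ ∑ i ∈ s with t ≤ h i, exp (u * h i) := card_nsmul_le_sum _ _ _ fun i hi =>
          exp_le_exp.2 (mul_le_mul_of_nonneg_left (mem_filter.1 hi).2 hu)
      _ ≤ ∑ i ∈ s, exp (u * h i) :=
          sum_le_sum_of_subset_of_nonneg (filter_subset _ _) fun i _ _ => (exp_pos _).le
  rw [expect_eq_sum_div_card, mul_div_assoc']
  gcongr
  rw [exp_neg, ← div_eq_inv_mul, le_div_iff₀ (exp_pos _)]
  exact hmarkov

end UniformAverages

section Switches

variable {W : Type*}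

lemma Equiv.Perm.apply_apply_of_mul_self_eq_one {f : Perm W} (h : f * f = 1) (z : W) :
    f (f z) = z := by
  rw [← Perm.mul_apply, h, Perm.one_apply]

def DifferByOneSwitch (f g : Perm W) : Prop :=
  ∃ J : Finset W, #J ≤ 4 ∧ ∀ z ∉ J, f z = g z

lemma DifferByOneSwitch.mul_left {f g : Perm W} (h : DifferByOneSwitch f g) (σ : Perm W) :
    DifferByOneSwitch (σ * f) (σ * g) := by
  obtain ⟨J, hJ, hfg⟩ := h
  exact ⟨J, hJ, fun z hz => congrArg σ (hfg z hz)⟩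

variable [DecidableEq W]

lemma differByOneSwitch_conj_swap (f : Perm W) (x y : W) :
    DifferByOneSwitch f (swap x y * f * swap x y) := by
  refine ⟨{x, y, f⁻¹ x, f⁻¹ y}, card_le_four, fun z hz => ?_⟩
  simp only [mem_insert, mem_singleton, not_or] at hz
  obtain ⟨hx, hy, hfx, hfy⟩ := hz
  have hx' : f z ≠ x := fun h => hfx (by simp [← h])
  have hy' : f z ≠ y := fun h => hfy (by simp [← h])
  simp [swap_apply_of_ne_of_ne, hx, hy, hx', hy']

lemma mul_self_swap_mul_eq_one {f : Perm W} (hf : f * f = 1) {w x : W}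
    (hc : f * swap w x = swap w x * f) : (swap w x * f) * (swap w x * f) = 1 := by
  rw [mul_assoc, ← mul_assoc f, hc, mul_assoc, hf, mul_one, swap_mul_self]

end Switches

section Matchings

variable {W : Type*} [Fintype W] [DecidableEq W]

def matchingsOn (S : Finset W) : Finset (Perm W) := {f | f * f = 1 ∧ f.support = S}

lemma mem_matchingsOn {S : Finset W} {f : Perm W} :
    f ∈ matchingsOn S ↔ f * f = 1 ∧ f.support = S := by
  simp [matchingsOn]

lemma matchingsOn_empty : matchingsOn (∅ : Finset W) = {1} := by
  ext f; simp +contextual [mem_matchingsOn]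

lemma swap_apply_mul_mem_matchingsOn {f : Perm W} (hf : f * f = 1) (w : W) :
    swap w (f w) * f ∈ matchingsOn ((f.support.erase w).erase (f w)) := by
  have hc : f * swap w (f w) = swap w (f w) * f := by
    rw [mul_swap_eq_swap_mul, Perm.apply_apply_of_mul_self_eq_one hf, swap_comm]
  refine mem_matchingsOn.2 ⟨mul_self_swap_mul_eq_one hf hc, ?_⟩
  ext z
  have := Perm.apply_apply_of_mul_self_eq_one hf
  simp only [Perm.mem_support, mem_erase, Perm.mul_apply, swap_apply_def]
  grind

lemma swap_mul_mem_matchingsOn {S : Finset W} {w x : W} (hw : w ∈ S) (hx : x ∈ S) (hxw : x ≠ w)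
    {g : Perm W} (hg : g ∈ matchingsOn ((S.erase w).erase x)) :
    swap w x * g ∈ matchingsOn S ∧ (swap w x * g) w = x := by
  obtain ⟨hgg, hS⟩ := mem_matchingsOn.1 hg
  have hsupp : ∀ z, g z ≠ z ↔ z ≠ x ∧ z ≠ w ∧ z ∈ S := by
    intro z; rw [← Perm.mem_support, hS]; simp only [mem_erase]
  have hgw : g w = w := by grind
  have hgx : g x = x := by grind
  have hc : g * swap w x = swap w x * g := by rw [mul_swap_eq_swap_mul, hgw, hgx]
  refine ⟨mem_matchingsOn.2 ⟨mul_self_swap_mul_eq_one hgg hc, ?_⟩, by simp [hgw]⟩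
  ext z
  have := Perm.apply_apply_of_mul_self_eq_one hgg
  simp only [Perm.mem_support, Perm.mul_apply, swap_apply_def]
  grind

lemma conj_swap_mem_matchingsOn {S : Finset W} {x y : W} (hx : x ∈ S) (hy : y ∈ S) {f : Perm W}
    (hf : f ∈ matchingsOn S) : swap x y * f * swap x y ∈ matchingsOn S := by
  obtain ⟨hff, rfl⟩ := mem_matchingsOn.1 hf
  have := Perm.apply_apply_of_mul_self_eq_one hff
  refine mem_matchingsOn.2 ⟨?_, ?_⟩
  · ext z; simp [this]
  · ext z
    simp only [Perm.mem_support, Perm.mul_apply, swap_apply_def] at hx hy ⊢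
    grind

lemma filter_apply_eq_image_swap_mul {S : Finset W} {w x : W} (hw : w ∈ S) (hx : x ∈ S)
    (hxw : x ≠ w) :
    {f ∈ matchingsOn S | f w = x} = (matchingsOn ((S.erase w).erase x)).image (swap w x * ·) := by
  ext f
  simp only [mem_filter, mem_image]
  constructor
  · rintro ⟨hf, rfl⟩
    obtain ⟨hff, rfl⟩ := mem_matchingsOn.1 hf
    exact ⟨_, swap_apply_mul_mem_matchingsOn hff w, swap_mul_self_mul _ _ _⟩
  · rintro ⟨g, hg, rfl⟩
    exact swap_mul_mem_matchingsOn hw hx hxw hg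

lemma filter_apply_eq_image_conj_swap {S : Finset W} {w x y : W} (hx : x ∈ S) (hy : y ∈ S)
    (hxw : x ≠ w) (hyw : y ≠ w) :
    {f ∈ matchingsOn S | f w = y} =
      {f ∈ matchingsOn S | f w = x}.image (fun f => swap x y * f * swap x y) := by
  have hw := swap_apply_of_ne_of_ne hxw.symm hyw.symm
  ext f
  simp only [mem_filter, mem_image]
  constructor
  · rintro ⟨hf, hfw⟩
    refine ⟨swap x y * f * swap x y, ⟨conj_swap_mem_matchingsOn hx hy hf, ?_⟩, ?_⟩
    · simp [hw, hfw]
    · ext z; simp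
  · rintro ⟨g, ⟨hg, hgw⟩, rfl⟩
    exact ⟨conj_swap_mem_matchingsOn hx hy hg, by simp [hw, hgw]⟩

lemma abs_expect_filter_apply_sub_le {S : Finset W} {G : Perm W → ℝ} {κ : ℝ}
    (hG : ∀ f ∈ matchingsOn S, ∀ g ∈ matchingsOn S, DifferByOneSwitch f g → |G f - G g| ≤ κ)
    {w x y : W} (hx : x ∈ S) (hy : y ∈ S) (hxw : x ≠ w) (hyw : y ≠ w)
    (hne : {f ∈ matchingsOn S | f w = x}.Nonempty) :
    |𝔼 f ∈ matchingsOn S with f w = x, G f - 𝔼 f ∈ matchingsOn S with f w = y, G f| ≤ κ := by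
  rw [filter_apply_eq_image_conj_swap hx hy hxw hyw,
    expect_image fun f _ g _ h => by simpa using h, ← expect_sub_distrib]
  refine (abs_expect_le _ _).trans (expect_le hne fun f hf => ?_)
  have hf := (mem_filter.1 hf).1
  exact hG _ hf _ (conj_swap_mem_matchingsOn hx hy hf) (differByOneSwitch_conj_swap f x y)

theorem expect_exp_sub_expect_matchingsOn_le {κ : ℝ} (hκ : 0 < κ) (u : ℝ) (S : Finset W)
    (G : Perm W → ℝ)
    (hG : ∀ f ∈ matchingsOn S, ∀ g ∈ matchingsOn S, DifferByOneSwitch f g → |G f - G g| ≤ κ) :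
    𝔼 f ∈ matchingsOn S, exp (u * (G f - 𝔼 g ∈ matchingsOn S, G g)) ≤
      exp (u ^ 2 * #S * κ ^ 2 / 4) := by
  induction S using Finset.strongInduction generalizing G with
  | H S ih =>
  rcases S.eq_empty_or_nonempty with rfl | ⟨w, hw⟩
  · simp [matchingsOn_empty]
  have hfw : ∀ f ∈ matchingsOn S, f w ∈ S ∧ f w ≠ w := fun f hf => by
    obtain ⟨-, rfl⟩ := mem_matchingsOn.1 hf
    exact ⟨Perm.apply_mem_support.2 hw, Perm.mem_support.1 hw⟩
  rw [show u ^ 2 * #S * κ ^ 2 / 4 = u ^ 2 * (#S - 2) * κ ^ 2 / 4 + u ^ 2 * κ ^ 2 / 2 by ring,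
    exp_add]
  refine expect_exp_sub_expect_le (X := fun f : Perm W => f w) G u hκ (exp_pos _).le ?_ ?_
  · intro f hf
    obtain ⟨hx, hxw⟩ := hfw f hf
    have hsub : (S.erase w).erase (f w) ⊂ S := (erase_subset _ _).trans_ssubset (erase_ssubset hw)
    have hcard : (#((S.erase w).erase (f w)) : ℝ) = #S - 2 := by
      have h1 := card_erase_add_one (mem_erase.2 ⟨hxw, hx⟩)
      have h2 := card_erase_add_one hw
      rw [eq_sub_iff_add_eq]; exact_mod_cast (by omega : #((S.erase w).erase (f w)) + 2 = #S)
    have hinj : Set.InjOn (swap w (f w) * ·) ↑(matchingsOn ((S.erase w).erase (f w))) :=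
      (mul_right_injective _).injOn
    simp only [condExpect]
    rw [filter_apply_eq_image_swap_mul hw hx hxw, expect_image hinj, expect_image hinj, ← hcard]
    refine ih _ hsub _ fun g hg g' hg' h => ?_
    exact hG _ (swap_mul_mem_matchingsOn hw hx hxw hg).1 _
      (swap_mul_mem_matchingsOn hw hx hxw hg').1 (h.mul_left _)
  · intro f hf f' hf'
    obtain ⟨hx, hxw⟩ := hfw f hf
    obtain ⟨hy, hyw⟩ := hfw f' hf'
    exact abs_expect_filter_apply_sub_le hG hx hy hxw hyw ⟨f, mem_filter.2 ⟨hf, rfl⟩⟩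

lemma mem_matchingsOn_univ {f : Perm W} :
    f ∈ matchingsOn univ ↔ (∀ x, f (f x) = x) ∧ ∀ x, f x ≠ x := by
  simp [mem_matchingsOn, Perm.ext_iff, eq_univ_iff_forall]

lemma natCard_perfMatching : Nat.card (PerfMatching W) = #(matchingsOn (univ : Finset W)) :=
  Nat.card_eq_fintype_card.trans (Fintype.card_of_subtype _ fun _ => mem_matchingsOn_univ)

lemma natCard_subtype_perfMatching (q : Perm W → Prop) [DecidablePred q] :
    Nat.card {σ : PerfMatching W // q σ.1} = #{f ∈ matchingsOn univ | q f} := by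
  rw [Nat.card_congr (Equiv.subtypeSubtypeEquivSubtypeInter _ q), Nat.card_eq_fintype_card,
    Fintype.card_of_subtype]
  simp [mem_matchingsOn_univ]

lemma tsum_perfMatching (G : Perm W → ℝ) :
    ∑' σ : PerfMatching W, G σ.1 = ∑ f ∈ matchingsOn univ, G f := by
  rw [tsum_fintype, sum_subtype _ fun _ => mem_matchingsOn_univ]

end Matchings

theorem stmt_12_general (W : Type*) [Finite W] (N : ℕ) (hW : Nat.card W = N)
    (κ : ℝ) (hκ : 0 < κ)
    (F : PerfMatching W → ℝ)
    (hF : ∀ m m' : PerfMatching W,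
      (∃ J : Finset W, J.card ≤ 4 ∧ ∀ x ∉ J, m.1 x = m'.1 x) → |F m - F m'| ≤ κ)
    (t : ℝ) (ht : 0 < t) :
    (Nat.card {σ : PerfMatching W //
        t ≤ F σ - (∑' σ' : PerfMatching W, F σ') / (Nat.card (PerfMatching W) : ℝ)} : ℝ) /
      (Nat.card (PerfMatching W) : ℝ) ≤
    Real.exp (-(t ^ 2) / (N * κ ^ 2)) := by
  classical
  have := Fintype.ofFinite W
  obtain ⟨G, rfl⟩ : ∃ G : Perm W → ℝ, F = G ∘ Subtype.val :=
    ⟨Function.extend Subtype.val F 0, funext fun σ => (Subtype.val_injective.extend_apply F 0 σ).symm⟩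
  simp only [Function.comp_apply]
  rw [tsum_perfMatching, natCard_perfMatching, ← expect_eq_sum_div_card,
    natCard_subtype_perfMatching (fun f => t ≤ G f - _)]
  have hG : ∀ f ∈ matchingsOn univ, ∀ g ∈ matchingsOn univ, DifferByOneSwitch f g →
      |G f - G g| ≤ κ := fun f hf g hg =>
    hF ⟨f, mem_matchingsOn_univ.1 hf⟩ ⟨g, mem_matchingsOn_univ.1 hg⟩
  have hN : (#(univ : Finset W) : ℝ) = N := by rw [card_univ, ← Nat.card_eq_fintype_card, hW]
  set u := 2 * t / (N * κ ^ 2)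
  calc _ ≤ exp (-(u * t)) * 𝔼 f ∈ matchingsOn univ,
          exp (u * (G f - 𝔼 g ∈ matchingsOn univ, G g)) :=
        card_filter_le_div_card_le _ _ t (by positivity)
    _ ≤ exp (-(u * t)) * exp (u ^ 2 * N * κ ^ 2 / 4) := by
        rw [← hN]; gcongr; exact expect_exp_sub_expect_matchingsOn_le hκ u univ G hG
    _ = exp (-(t ^ 2) / (N * κ ^ 2)) := by
        rw [← exp_add]
        rcases eq_or_ne (N : ℝ) 0 with h0 | h0
        -- for `N = 0` both exponents are `0`, division by zero giving zero
        · simp [u, h0]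
        · congr 1; simp only [u]; field_simp; ring

/-- Let `W` be a finite set of even cardinality `N`, `Σ` the set of
perfect matchings of `W`, and `σ` uniform on `Σ`.  If `F : Σ → ℝ` changes by at most
`κ` between matchings that coincide outside a set `J ⊆ W` with `|J| ≤ 4`, then for
`t > 0`, `P(F(σ) − E F(σ) ≥ t) ≤ exp(−t²/(N κ²))`. -/
theorem stmt_12 (W : Type*) [Finite W] (N : ℕ) (hW : Nat.card W = N)
    (hNeven : Even N) (κ : ℝ) (hκ : 0 < κ)
    (F : PerfMatching W → ℝ)
    (hF : ∀ m m' : PerfMatching W,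
      (∃ J : Finset W, J.card ≤ 4 ∧ ∀ x ∉ J, m.1 x = m'.1 x) → |F m - F m'| ≤ κ)
    (t : ℝ) (ht : 0 < t) :
    (Nat.card {σ : PerfMatching W //
        t ≤ F σ - (∑' σ' : PerfMatching W, F σ') / (Nat.card (PerfMatching W) : ℝ)} : ℝ) /
      (Nat.card (PerfMatching W) : ℝ) ≤
    Real.exp (-(t ^ 2) / (N * κ ^ 2)) :=
  stmt_12_general W N hW κ hκ F hF t ht
end

section
/- Fix λ > 0, and for each n let M(n) be a binomial random variable with parameters n(n−1)/2 and λ/n. Then the sequence 2M(n)/n satisfies a large deviation principle on [0,∞) with speed n and good rate function j(x) = (λ − x + x log(x/λ))/2 (with the convention 0 log 0 = 0, so j(0) = λ/2): j is lower semicontinuous with compact level sets, and for every Borel set B ⊆ [0,∞), −inf_{x ∈ B°} j(x) ≤ liminf_{n→∞} (1/n) log P(2M(n)/n ∈ B) ≤ limsup_{n→∞} (1/n) log P(2M(n)/n ∈ B) ≤ −inf_{x ∈ cl(B)} j(x), where B° and cl(B) denote the interior and closure of B in [0,∞). -/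
open Filter
open scoped Classical

/-- Probability that `2 M(n) / n ∈ B`, where `M(n)` is binomial with parameters
`n(n−1)/2` and `λ/n`. -/
noncomputable def binomProb (lam : ℝ) (n : ℕ) (B : Set NNReal) : ℝ :=
  ∑ k ∈ Finset.range (n * (n - 1) / 2 + 1),
    if ((2 * k : NNReal) / (n : NNReal)) ∈ B then
      (Nat.choose (n * (n - 1) / 2) k : ℝ) * (lam / n) ^ k *
        (1 - lam / n) ^ (n * (n - 1) / 2 - k)
    else 0

/-- The rate function `j(x) = (λ − x + x log(x/λ))/2` (with `j(0) = λ/2`, as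
`Real.log 0 = 0`). -/
noncomputable def rateJ (lam : ℝ) (x : NNReal) : ℝ :=
  (lam - x + x * Real.log (x / lam)) / 2

/-- `(1/n) log x`, interpreted as `−∞` when `x` is not positive. -/
noncomputable def elog (x : ℝ) (n : ℕ) : EReal :=
  if 0 < x then ((Real.log x / n : ℝ) : EReal) else ⊥

/-!
Upper bound: by the Chernoff bound, `P(M(n) = k) ≤ exp(k - μ - k log(k/μ))` with mean
`μ = λ(n-1)/2`, and this is at most `exp(λ/2 - n j(2k/n))`; summing over the at most `n²`
values of `k` costs only a factor `n²`, which is invisible at speed `n`.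

Lower bound: for `x ∈ B°` the single value `k = ⌈nx/2⌉` already has probability
`exp(-n j(x) + o(n))`, by `C(N,k) ≥ (N+1-k)^k/k!`, the upper Stirling bound
`k! ≤ e k (k/e)^k` and `(1-p)^N ≥ exp(-Np/(1-p))`; for `x = 0` one takes `k = 0`.

`j` is continuous, and `j(x) ≥ (x - eλ)/2` makes its sublevel sets bounded.
-/

open Topology Real

noncomputable def binomTerm (N : ℕ) (p : ℝ) (k : ℕ) : ℝ :=
  N.choose k * p ^ k * (1 - p) ^ (N - k)

noncomputable def binomLowerExponent (N : ℕ) (p : ℝ) (k : ℕ) : ℝ :=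
  k * log ((N + 1 - k) * p / k) + k - 1 - log k - N * p / (1 - p)

section BinomialTerm

variable {N : ℕ} {p : ℝ}

lemma binomTerm_nonneg (hp0 : 0 ≤ p) (hp1 : p ≤ 1) (k : ℕ) : 0 ≤ binomTerm N p k := by
  have : 0 ≤ 1 - p := by linarith
  unfold binomTerm
  positivity

/-- Chernoff: `P(M = k) s^k ≤ E[s^M] = (1 - p + ps)^N`. -/
lemma binomTerm_mul_pow_le_exp (hp0 : 0 ≤ p) (hp1 : p ≤ 1) {s : ℝ} (hs : 0 ≤ s) (k : ℕ) :
    binomTerm N p k * s ^ k ≤ exp (N * p * (s - 1)) := by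
  have h1p : 0 ≤ 1 - p := by linarith
  rcases le_or_gt k N with hk | hk
  · calc binomTerm N p k * s ^ k = (p * s) ^ k * (1 - p) ^ (N - k) * N.choose k := by
          rw [binomTerm, mul_pow]; ring
      _ ≤ ∑ i ∈ Finset.range (N + 1), (p * s) ^ i * (1 - p) ^ (N - i) * N.choose i :=
          Finset.single_le_sum (f := fun i => (p * s) ^ i * (1 - p) ^ (N - i) * (N.choose i : ℝ))
            (fun i _ => by positivity) (Finset.mem_range.2 (by omega))
      _ = (p * (s - 1) + 1) ^ N := by rw [← add_pow]; ring
      _ ≤ exp (p * (s - 1)) ^ N := pow_le_pow_left₀ (by nlinarith) (add_one_le_exp _) N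
      _ = exp (N * p * (s - 1)) := by rw [← exp_nat_mul]; ring_nf
  · simp [binomTerm, Nat.choose_eq_zero_of_lt hk, (exp_pos _).le]

/-- Optimizing the Chernoff bound at `s = k / (Np)`. -/
lemma binomTerm_le_exp (hp0 : 0 ≤ p) (hp1 : p ≤ 1) (hμ : 0 < N * p) (k : ℕ) :
    binomTerm N p k ≤ exp (k - N * p - k * log (k / (N * p))) := by
  rcases Nat.eq_zero_or_pos k with rfl | hk
  · simpa [mul_comm] using binomTerm_mul_pow_le_exp (N := N) hp0 hp1 le_rfl 0
  · have hs : 0 < (k : ℝ) / (N * p) := by positivity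
    have h := binomTerm_mul_pow_le_exp (N := N) hp0 hp1 hs.le k
    rw [← exp_log hs, ← exp_nat_mul, ← le_div_iff₀ (exp_pos _), ← exp_sub, exp_log hs] at h
    refine h.trans_eq (congrArg exp ?_)
    rw [mul_sub, mul_div_cancel₀ _ hμ.ne', mul_one]

lemma exp_neg_mul_div_le_one_sub_pow (hp1 : p < 1) :
    exp (-(N * p / (1 - p))) ≤ (1 - p) ^ N := by
  have h1p : 0 < 1 - p := by linarith
  have hlog : -(p / (1 - p)) ≤ log (1 - p) := by
    have := one_sub_inv_le_log_of_pos h1p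
    rwa [show 1 - (1 - p)⁻¹ = -(p / (1 - p)) by field_simp; ring] at this
  calc exp (-(N * p / (1 - p))) = exp (-(p / (1 - p))) ^ N := by rw [← exp_nat_mul]; ring_nf
    _ ≤ (1 - p) ^ N := by
        gcongr
        exact (exp_le_exp.2 hlog).trans (exp_log h1p).le

/-- The upper half of Stirling's formula, from the monotonicity of `Stirling.stirlingSeq`. -/
lemma factorial_le_exp_one_mul_self_mul_pow {k : ℕ} (hk : 1 ≤ k) :
    (k.factorial : ℝ) ≤ exp 1 * k * (k / exp 1) ^ k := by
  have h := Stirling.stirlingSeq'_antitone (Nat.zero_le (k - 1))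
  simp only [Function.comp, Nat.succ_eq_add_one, Nat.sub_add_cancel hk, zero_add] at h
  rw [Stirling.stirlingSeq_one, Stirling.stirlingSeq] at h
  have hsqrt : √(2 * k : ℝ) = √2 * √k := Real.sqrt_mul zero_le_two _
  have hk' : √(k : ℝ) ≤ k := Real.sqrt_le_self_iff.2 (Or.inr (by exact_mod_cast hk))
  rw [div_le_div_iff₀ (by positivity) (by positivity), hsqrt] at h
  have h2 : (0 : ℝ) < √2 := by positivity
  calc (k.factorial : ℝ) ≤ exp 1 * √k * (k / exp 1) ^ k := by
        refine le_of_mul_le_mul_right ?_ h2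
        linarith
    _ ≤ exp 1 * k * (k / exp 1) ^ k := by gcongr

lemma exp_binomLowerExponent_le {k : ℕ} (hk : 1 ≤ k) (hkN : k ≤ N) (hp0 : 0 < p)
    (hp1 : p < 1) : exp (binomLowerExponent N p k) ≤ binomTerm N p k := by
  have hk0 : (0 : ℝ) < k := by exact_mod_cast hk
  have hNk : (0 : ℝ) < N + 1 - k := by
    have : (k : ℝ) ≤ N := by exact_mod_cast hkN
    linarith
  have hy : 0 < (N + 1 - k) * p / k := by positivity
  have hchoose : ((N + 1 - k : ℝ)) ^ k / k.factorial ≤ N.choose k := by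
    simpa [Nat.cast_sub (show k ≤ N + 1 by omega)] using Nat.pow_le_choose (α := ℝ) k N
  calc exp (binomLowerExponent N p k)
      = ((N + 1 - k) * p) ^ k / (exp 1 * k * (k / exp 1) ^ k) * exp (-(N * p / (1 - p))) := by
        rw [binomLowerExponent, sub_eq_add_neg _ (N * p / (1 - p)), exp_add, exp_sub, exp_sub,
          exp_add, exp_log hk0, exp_nat_mul, exp_log hy, ← exp_one_pow]
        field_simp
        rw [← mul_pow, ← mul_pow]
        field_simp
    _ ≤ ((N + 1 - k) * p) ^ k / k.factorial * (1 - p) ^ (N - k) := by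
        gcongr
        · exact factorial_le_exp_one_mul_self_mul_pow hk
        · exact (exp_neg_mul_div_le_one_sub_pow hp1).trans
            (pow_le_pow_of_le_one (by linarith) (by linarith) (Nat.sub_le N k))
    _ ≤ binomTerm N p k := by
        rw [binomTerm, mul_pow, mul_div_right_comm]
        gcongr

end BinomialTerm

lemma cast_mul_pred_div_two (n : ℕ) : ((n * (n - 1) / 2 : ℕ) : ℝ) = n * (n - 1) / 2 := by
  rw [← Nat.choose_two_right, Nat.cast_choose_two]

lemma coe_two_mul_div (k n : ℕ) : (((2 * k : NNReal) / (n : NNReal) : NNReal) : ℝ) = 2 * k / n := by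
  push_cast
  rfl

lemma binomProb_eq (lam : ℝ) (n : ℕ) (B : Set NNReal) :
    binomProb lam n B = ∑ k ∈ Finset.range (n * (n - 1) / 2 + 1),
      if ((2 * k : NNReal) / (n : NNReal)) ∈ B then binomTerm (n * (n - 1) / 2) (lam / n) k
      else 0 :=
  rfl

lemma binomTerm_le_binomProb {lam : ℝ} (hlam : 0 ≤ lam) {n k : ℕ} (hln : lam ≤ n)
    (hk : k ≤ n * (n - 1) / 2) {B : Set NNReal} (hkB : ((2 * k : NNReal) / (n : NNReal)) ∈ B) :
    binomTerm (n * (n - 1) / 2) (lam / n) k ≤ binomProb lam n B := by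
  have hp0 : 0 ≤ lam / n := by positivity
  have hp1 : lam / n ≤ 1 := div_le_one_of_le₀ hln (Nat.cast_nonneg n)
  have h := Finset.single_le_sum (f := fun i : ℕ => if ((2 * i : NNReal) / (n : NNReal)) ∈ B then
      binomTerm (n * (n - 1) / 2) (lam / n) i else 0)
    (fun i _ => by split_ifs; exacts [binomTerm_nonneg hp0 hp1 i, le_rfl])
    (Finset.mem_range.2 (Nat.lt_succ_of_le hk))
  rwa [if_pos hkB, ← binomProb_eq] at h

/-- The Chernoff bound in terms of the rate function; the loss `λ/2` comes from the mean of
`M(n)` being `λ(n-1)/2` rather than `λn/2`. -/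
lemma binomTerm_le_exp_rateJ {lam : ℝ} (hlam : 0 < lam) {n : ℕ} (hn : 2 ≤ n) (hln : lam ≤ n)
    (k : ℕ) :
    binomTerm (n * (n - 1) / 2) (lam / n) k ≤
      exp (lam / 2 - n * rateJ lam ((2 * k : NNReal) / (n : NNReal))) := by
  have hn1 : (1 : ℝ) < n := by exact_mod_cast hn
  have hn0 : (0 : ℝ) < n := by linarith
  have hmean : ((n * (n - 1) / 2 : ℕ) : ℝ) * (lam / n) = lam * (n - 1) / 2 := by
    rw [cast_mul_pred_div_two]
    field_simp
  have hμ : 0 < ((n * (n - 1) / 2 : ℕ) : ℝ) * (lam / n) := by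
    rw [hmean]
    have : (0 : ℝ) < n - 1 := by linarith
    positivity
  refine (binomTerm_le_exp (by positivity) (div_le_one_of_le₀ hln hn0.le) hμ k).trans
    (exp_le_exp.2 ?_)
  have hlog : k * log (2 * k / n / lam) ≤ k * log (k / (lam * (n - 1) / 2)) := by
    rcases Nat.eq_zero_or_pos k with rfl | hk
    · simp
    · have hk0 : (0 : ℝ) < k := by exact_mod_cast hk
      refine mul_le_mul_of_nonneg_left (log_le_log (by positivity) ?_) hk0.le
      calc 2 * k / n / lam = 2 * k / (n * lam) := div_div _ _ _
        _ ≤ 2 * k / ((n - 1) * lam) := by gcongr; linarith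
        _ = k / (lam * (n - 1) / 2) := by field_simp
  rw [rateJ, coe_two_mul_div, hmean]
  have : (n : ℝ) * ((lam - 2 * k / n + 2 * k / n * log (2 * k / n / lam)) / 2)
      = n * lam / 2 - k + k * log (2 * k / n / lam) := by
    field_simp
  rw [this]
  linarith

lemma binomProb_le_exp {lam m : ℝ} (hlam : 0 < lam) {n : ℕ} (hn : 2 ≤ n) (hln : lam ≤ n)
    {B : Set NNReal} (hm : ∀ y ∈ B, m ≤ rateJ lam y) :
    binomProb lam n B ≤ exp (2 * log n + (lam / 2 - n * m)) := by
  have hterm : ∀ k ∈ Finset.range (n * (n - 1) / 2 + 1),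
      (if ((2 * k : NNReal) / (n : NNReal)) ∈ B then binomTerm (n * (n - 1) / 2) (lam / n) k
        else 0) ≤ exp (lam / 2 - n * m) := by
    intro k _
    split_ifs with hkB
    · refine (binomTerm_le_exp_rateJ hlam hn hln k).trans (exp_le_exp.2 ?_)
      have := hm _ hkB
      nlinarith
    · positivity
  have hcard : ((n * (n - 1) / 2 + 1 : ℕ) : ℝ) ≤ n ^ 2 := by
    have : (2 : ℝ) ≤ n := by exact_mod_cast hn
    rw [Nat.cast_succ, cast_mul_pred_div_two]
    nlinarith
  calc binomProb lam n B ≤ (n * (n - 1) / 2 + 1 : ℕ) • exp (lam / 2 - n * m) := by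
        simpa [binomProb_eq] using Finset.sum_le_card_nsmul _ _ _ hterm
    _ ≤ n ^ 2 * exp (lam / 2 - n * m) := by
        rw [nsmul_eq_mul]
        gcongr
    _ = exp (2 * log n + (lam / 2 - n * m)) := by
        have hn0 : (0 : ℝ) < n := by positivity
        rw [exp_add, two_mul, exp_add, exp_log hn0, sq]

lemma elog_le_of_le_exp {x a : ℝ} (h : x ≤ exp a) (n : ℕ) : elog x n ≤ ((a / n : ℝ) : EReal) := by
  unfold elog
  split_ifs with hx
  · exact EReal.coe_le_coe_iff.2 <| div_le_div_of_nonneg_right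
      ((log_le_log hx h).trans (log_exp a).le) n.cast_nonneg
  · exact bot_le

lemma le_elog_of_exp_le {x a : ℝ} (h : exp a ≤ x) (n : ℕ) : ((a / n : ℝ) : EReal) ≤ elog x n := by
  rw [elog, if_pos ((exp_pos a).trans_le h), EReal.coe_le_coe_iff]
  exact div_le_div_of_nonneg_right ((log_exp a).symm.le.trans (log_le_log (exp_pos a) h))
    n.cast_nonneg

lemma limsup_elog_le {P a : ℕ → ℝ} {L : ℝ} (hP : ∀ᶠ n in atTop, P n ≤ exp (a n))
    (ha : Tendsto (fun n => a n / n) atTop (𝓝 L)) :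
    limsup (fun n => elog (P n) n) atTop ≤ L :=
  calc limsup (fun n => elog (P n) n) atTop ≤ limsup (fun n => ((a n / n : ℝ) : EReal)) atTop :=
        limsup_le_limsup (hP.mono fun n h => elog_le_of_le_exp h n)
    _ = L := (EReal.tendsto_coe.2 ha).limsup_eq

lemma le_liminf_elog {P a : ℕ → ℝ} {L : ℝ} (hP : ∀ᶠ n in atTop, exp (a n) ≤ P n)
    (ha : Tendsto (fun n => a n / n) atTop (𝓝 L)) :
    (L : EReal) ≤ liminf (fun n => elog (P n) n) atTop :=
  calc (L : EReal) = liminf (fun n => ((a n / n : ℝ) : EReal)) atTop :=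
        (EReal.tendsto_coe.2 ha).liminf_eq.symm
    _ ≤ liminf (fun n => elog (P n) n) atTop :=
        liminf_le_liminf (hP.mono fun n h => le_elog_of_exp_le h n)

lemma tendsto_log_natCast_div_self : Tendsto (fun n : ℕ => log n / n) atTop (𝓝 0) :=
  isLittleO_log_id_atTop.tendsto_div_nhds_zero.comp tendsto_natCast_atTop_atTop

lemma tendsto_mean_div_one_sub (lam : ℝ) :
    Tendsto (fun n : ℕ => ((n * (n - 1) / 2 : ℕ) * (lam / n) / (1 - lam / n)) / n) atTop
      (𝓝 (lam / 2)) := by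
  have h : Tendsto (fun n : ℕ => lam / 2 * (1 - 1 / (n : ℝ)) / (1 - lam * (1 / n))) atTop
      (𝓝 (lam / 2 * (1 - 0) / (1 - lam * 0))) :=
    ((tendsto_const_nhds.sub tendsto_one_div_atTop_nhds_zero_nat).const_mul _).div
      (tendsto_const_nhds.sub (tendsto_one_div_atTop_nhds_zero_nat.const_mul _)) (by simp)
  refine (by simpa using h : Tendsto _ _ _).congr' ?_
  filter_upwards [eventually_ne_atTop 0] with n hn
  rw [cast_mul_pred_div_two]
  field_simp

lemma tendsto_binomLowerExponent_div {lam c : ℝ} (hlam : lam ≠ 0) (hc : 0 < c) {k : ℕ → ℕ}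
    (hk : Tendsto (fun n => (k n : ℝ) / n) atTop (𝓝 c)) :
    Tendsto (fun n : ℕ => binomLowerExponent (n * (n - 1) / 2) (lam / n) (k n) / n) atTop
      (𝓝 (c * log (lam / (2 * c)) + c - lam / 2)) := by
  have ht := tendsto_one_div_atTop_nhds_zero_nat (𝕜 := ℝ)
  have hb : Tendsto (fun n : ℕ => (1 - 1 / (n : ℝ)) / 2 + 1 / n * (1 / n) - k n / n * (1 / n))
      atTop (𝓝 (1 / 2)) := by
    convert (((tendsto_const_nhds.sub ht).div_const 2).add (ht.mul ht)).sub (hk.mul ht) using 2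
    norm_num
  have hlog : Tendsto (fun n : ℕ =>
      log (lam * ((1 - 1 / (n : ℝ)) / 2 + 1 / n * (1 / n) - k n / n * (1 / n)) / (k n / n)))
      atTop (𝓝 (log (lam / (2 * c)))) := by
    have h := ((tendsto_const_nhds (x := lam)).mul hb).div hk hc.ne' |>.log
      (by simp [hlam, hc.ne'])
    rwa [show lam * (1 / 2) / c = lam / (2 * c) by ring] at h
  have hlogk := ((hk.log hc.ne').mul ht).add tendsto_log_natCast_div_self
  have htot := ((((hk.mul hlog).add hk).sub ht).sub hlogk).sub (tendsto_mean_div_one_sub lam)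
  rw [show ∀ a : ℝ, c * a + c - 0 - (log c * 0 + 0) - lam / 2 = c * a + c - lam / 2 by
      intro a; ring] at htot
  refine htot.congr' ?_
  filter_upwards [eventually_ne_atTop 0, hk.eventually (lt_mem_nhds hc)] with n hn hkn
  have hn0 : (n : ℝ) ≠ 0 := by exact_mod_cast hn
  have hk0 : (k n : ℝ) ≠ 0 := by
    rintro h
    simp [h] at hkn
  have harg : lam * ((1 - 1 / (n : ℝ)) / 2 + 1 / n * (1 / n) - k n / n * (1 / n)) / (k n / n)
      = (((n * (n - 1) / 2 : ℕ) : ℝ) + 1 - k n) * (lam / n) / k n := by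
    rw [cast_mul_pred_div_two]
    field_simp
  rw [binomLowerExponent, harg, log_div hk0 hn0]
  field_simp
  ring

section RateFunction

variable {lam : ℝ}

lemma rateJ_eq_mul_log (hlam : lam ≠ 0) (x : NNReal) :
    rateJ lam x = (lam - x + lam * (x / lam * log (x / lam))) / 2 := by
  rw [rateJ, ← mul_assoc, mul_div_cancel₀ _ hlam]

lemma continuous_rateJ (hlam : lam ≠ 0) : Continuous (rateJ lam) := by
  simp_rw [funext (rateJ_eq_mul_log hlam)]
  exact ((continuous_const.sub NNReal.continuous_coe).add (continuous_const.mul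
    (Real.continuous_mul_log.comp (NNReal.continuous_coe.div_const lam)))).div_const 2

lemma rateJ_nonneg (hlam : 0 < lam) (x : NNReal) : 0 ≤ rateJ lam x := by
  have h := self_sub_one_le_mul_log (div_nonneg x.coe_nonneg hlam.le)
  have h' := mul_le_mul_of_nonneg_left h hlam.le
  rw [mul_sub, mul_div_cancel₀ _ hlam.ne', mul_one] at h'
  rw [rateJ_eq_mul_log hlam.ne']
  linarith

/-- The tangent line of `t log t` at `t = e`. -/
lemma two_mul_sub_exp_one_le_mul_log {t : ℝ} (ht : 0 ≤ t) : 2 * t - exp 1 ≤ t * log t := by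
  rcases ht.eq_or_lt with rfl | ht
  · simp [(exp_pos 1).le]
  · have h := self_sub_one_le_mul_log (div_nonneg ht.le (exp_pos 1).le)
    rw [log_div ht.ne' (exp_pos 1).ne', log_exp] at h
    have h' := mul_le_mul_of_nonneg_left h (exp_pos 1).le
    field_simp at h'
    linarith

lemma sub_le_rateJ (hlam : 0 < lam) (x : NNReal) : (x - exp 1 * lam) / 2 ≤ rateJ lam x := by
  have h := mul_le_mul_of_nonneg_left
    (two_mul_sub_exp_one_le_mul_log (div_nonneg x.coe_nonneg hlam.le)) hlam.le
  have hx : lam * (2 * (x / lam)) = 2 * x := by field_simp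
  rw [mul_sub, hx] at h
  rw [rateJ_eq_mul_log hlam.ne']
  linarith

lemma isCompact_rateJ_sublevel (hlam : 0 < lam) (a : ℝ) :
    IsCompact {x : NNReal | rateJ lam x ≤ a} := by
  refine (isCompact_Icc (a := 0) (b := (2 * a + exp 1 * lam).toNNReal)).of_isClosed_subset
    (isClosed_le (continuous_rateJ hlam.ne') continuous_const) fun x hx => ⟨bot_le, ?_⟩
  have hx : rateJ lam x ≤ a := hx
  have := sub_le_rateJ hlam x
  exact Real.le_toNNReal_iff_coe_le (by linarith [x.coe_nonneg]) |>.2 (by linarith)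

end RateFunction

section LargeDeviations

variable {lam : ℝ} {B : Set NNReal}

lemma limsup_elog_binomProb_le_of_forall_le (hlam : 0 < lam) {m : ℝ}
    (hm : ∀ y ∈ B, m ≤ rateJ lam y) :
    limsup (fun n : ℕ => elog (binomProb lam n B) n) atTop ≤ ((-m : ℝ) : EReal) := by
  refine limsup_elog_le (a := fun n => 2 * log n + (lam / 2 - n * m)) ?_ ?_
  · filter_upwards [eventually_ge_atTop 2,
      tendsto_natCast_atTop_atTop.eventually_ge_atTop lam] with n hn hln
    exact binomProb_le_exp hlam hn hln hm
  · have h := ((tendsto_log_natCast_div_self.const_mul 2).add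
      (tendsto_one_div_atTop_nhds_zero_nat.const_mul (lam / 2))).sub_const m
    rw [mul_zero, mul_zero, add_zero, zero_sub] at h
    refine h.congr' ?_
    filter_upwards [eventually_ne_atTop 0] with n hn
    field_simp
    ring

lemma limsup_elog_binomProb_le (hlam : 0 < lam) (B : Set NNReal) :
    limsup (fun n : ℕ => elog (binomProb lam n B) n) atTop ≤
      -(⨅ x ∈ closure B, (rateJ lam x : EReal)) := by
  refine EReal.le_of_forall_lt_iff_le.1 fun z hz => ?_
  have hm : ∀ y ∈ B, -z ≤ rateJ lam y := fun y hy => by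
    have h : ((-z : ℝ) : EReal) < ⨅ x ∈ closure B, (rateJ lam x : EReal) := by
      rw [EReal.coe_neg]
      exact EReal.neg_lt_comm.1 hz
    exact_mod_cast (h.trans_le (iInf₂_le y (subset_closure hy))).le
  simpa using limsup_elog_binomProb_le_of_forall_le hlam hm

lemma neg_rateJ_zero_le_liminf (hlam : 0 < lam) (h0 : (0 : NNReal) ∈ B) :
    ((-rateJ lam 0 : ℝ) : EReal) ≤ liminf (fun n : ℕ => elog (binomProb lam n B) n) atTop := by
  refine le_liminf_elog
    (a := fun n => -((n * (n - 1) / 2 : ℕ) * (lam / n) / (1 - lam / n))) ?_ ?_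
  · filter_upwards [tendsto_natCast_atTop_atTop.eventually_gt_atTop lam] with n hn
    have hn0 : (0 : ℝ) < n := hlam.trans hn
    have h := binomTerm_le_binomProb hlam.le (n := n) (k := 0) hn.le (Nat.zero_le _)
      (by simpa using h0)
    simp only [binomTerm, Nat.choose_zero_right, pow_zero, Nat.sub_zero, Nat.cast_one,
      mul_one, one_mul] at h
    exact (exp_neg_mul_div_le_one_sub_pow ((div_lt_one hn0).2 hn)).trans h
  · simpa only [rateJ, NNReal.coe_zero, sub_zero, zero_mul, add_zero, neg_div] using
      (tendsto_mean_div_one_sub lam).neg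

lemma neg_rateJ_le_liminf_of_pos (hlam : 0 < lam) {x : NNReal} (hx0 : 0 < x)
    (hx : x ∈ interior B) :
    ((-rateJ lam x : ℝ) : EReal) ≤ liminf (fun n : ℕ => elog (binomProb lam n B) n) atTop := by
  set k : ℕ → ℕ := fun n => ⌈(x / 2 : ℝ) * n⌉₊
  have hx0' : (0 : ℝ) < x := hx0
  have hk : Tendsto (fun n => (k n : ℝ) / n) atTop (𝓝 (x / 2)) :=
    (tendsto_nat_ceil_mul_div_atTop (by positivity)).comp tendsto_natCast_atTop_atTop
  have hkB : ∀ᶠ n in atTop, ((2 * k n : NNReal) / (n : NNReal)) ∈ B := by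
    have h : Tendsto (fun n => ((2 * k n : NNReal) / (n : NNReal))) atTop (𝓝 x) := by
      refine NNReal.tendsto_coe.1 ?_
      have h := hk.const_mul 2
      simp_rw [coe_two_mul_div, mul_div_assoc]
      rwa [mul_div_cancel₀ _ two_ne_zero] at h
    exact h.eventually (mem_interior_iff_mem_nhds.1 hx)
  have hval : x / 2 * log (lam / (2 * (x / 2))) + x / 2 - lam / 2 = -rateJ lam x := by
    have hlog : log (lam / x) = -log (x / lam) := by rw [← log_inv, inv_div]
    rw [rateJ, mul_div_cancel₀ _ two_ne_zero, hlog]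
    ring
  refine hval ▸ le_liminf_elog ?_ (tendsto_binomLowerExponent_div hlam.ne' (half_pos hx0') hk)
  filter_upwards [tendsto_natCast_atTop_atTop.eventually_gt_atTop lam, hkB,
    hk.eventually (gt_mem_nhds (lt_add_one _)),
    tendsto_natCast_atTop_atTop.eventually_ge_atTop ((x : ℝ) + 3)] with n hn hnB hkn hnx
  have hn0 : (0 : ℝ) < n := hlam.trans hn
  have hk1 : 1 ≤ k n := Nat.ceil_pos.2 (by positivity)
  have hkN : k n ≤ n * (n - 1) / 2 := by
    rw [div_lt_iff₀ hn0] at hkn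
    have : (k n : ℝ) ≤ ((n * (n - 1) / 2 : ℕ) : ℝ) := by
      rw [cast_mul_pred_div_two]
      nlinarith
    exact_mod_cast this
  exact (exp_binomLowerExponent_le hk1 hkN (by positivity) ((div_lt_one hn0).2 hn)).trans
    (binomTerm_le_binomProb hlam.le hn.le hkN hnB)

lemma neg_rateJ_le_liminf (hlam : 0 < lam) {x : NNReal} (hx : x ∈ interior B) :
    ((-rateJ lam x : ℝ) : EReal) ≤ liminf (fun n : ℕ => elog (binomProb lam n B) n) atTop := by
  rcases eq_zero_or_pos x with rfl | hx0
  · exact neg_rateJ_zero_le_liminf hlam (interior_subset hx)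
  · exact neg_rateJ_le_liminf_of_pos hlam hx0 hx

end LargeDeviations

/-- For `λ > 0` and `M(n)` binomial with parameters `n(n−1)/2` and
`λ/n`, the sequence `2M(n)/n` satisfies the LDP on `[0,∞)` (modelled by `ℝ≥0`) with
speed `n` and good rate function `j(x) = (λ − x + x log(x/λ))/2`: `j` is a good rate
function, and for every Borel set `B ⊆ [0,∞)`,
`−inf_{B°} j ≤ liminf (1/n) log P(2M(n)/n ∈ B)`
and `limsup (1/n) log P(2M(n)/n ∈ B) ≤ −inf_{cl B} j`. -/
theorem stmt_13 (lam : ℝ) (hlam : 0 < lam) :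
    LowerSemicontinuous (rateJ lam) ∧
    (∀ x, 0 ≤ rateJ lam x) ∧
    (∀ a : ℝ, IsCompact {x : NNReal | rateJ lam x ≤ a}) ∧
    ∀ B : Set NNReal, MeasurableSet B →
      (-(⨅ x ∈ interior B, (rateJ lam x : EReal)) ≤
          liminf (fun n : ℕ => elog (binomProb lam n B) n) atTop) ∧
        limsup (fun n : ℕ => elog (binomProb lam n B) n) atTop ≤
          -(⨅ x ∈ closure B, (rateJ lam x : EReal)) := by
  refine ⟨(continuous_rateJ hlam.ne').lowerSemicontinuous, rateJ_nonneg hlam,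
    isCompact_rateJ_sublevel hlam, fun B _ => ⟨?_, limsup_elog_binomProb_le hlam B⟩⟩
  rw [EReal.neg_le]
  refine le_iInf₂ fun x hx => EReal.neg_le.1 ?_
  exact_mod_cast neg_rateJ_le_liminf hlam hx
end
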